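/- arXiv:2503.13977 — 10 statements merged into one kernel-verified Lean document; each statement's English description precedes it below -/
import Mathlib

section
/- Let B : H₊ → H₋ be a bounded linear operator with ‖B‖ < 1 and let W := {(x, Bx) : x ∈ H₊} be its graph. Then (a) for every w ∈ W one has −i[w,w] ≥ c‖w‖² with the constant c := (1 − ‖B‖²)/(1 + ‖B‖²) > 0; and (b) W is maximal with this positivity property: for every v ∈ (H₊ × H₋) \ W there exists a nonzero w in the linear span of W and v with −i[w,w] ≤ 0. In other words, W is a maximal completely positive-definite subspace of H₊ × H₋. -/
open scoped InnerProductSpace ComplexOrder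

/-- For `B : H₊ →L[ℂ] H₋` with `‖B‖ < 1`, the graph
`W = {(x, Bx)}` satisfies `−i[w,w] ≥ c‖w‖²` on `W` with
`c = (1 − ‖B‖²)/(1 + ‖B‖²) > 0` (here `‖w‖² = ‖w₁‖² + ‖w₂‖²` is the Hilbert
norm of `H₊ × H₋`, and `[a,b] = i⟨a₁,b₁⟩ − i⟨a₂,b₂⟩` is the standard symplectic
form, the inner products being linear in the first variable), and `W` is maximal
with this positivity property: for every `v ∉ W` there is a nonzero `w` in the
span of `W ∪ {v}` with `−i[w,w] ≤ 0`. -/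
theorem graph_maximal_completely_positive_definite
    {Hp Hm : Type*}
    [NormedAddCommGroup Hp] [InnerProductSpace ℂ Hp] [CompleteSpace Hp]
    [NormedAddCommGroup Hm] [InnerProductSpace ℂ Hm] [CompleteSpace Hm]
    (B : Hp →L[ℂ] Hm) (hB : ‖B‖ < 1)
    (W : Set (Hp × Hm)) (hW : W = {p : Hp × Hm | ∃ x : Hp, p = (x, B x)})
    (symp : Hp × Hm → Hp × Hm → ℂ)
    (hsymp : ∀ a b : Hp × Hm,
      symp a b = Complex.I * ⟪b.1, a.1⟫_ℂ - Complex.I * ⟪b.2, a.2⟫_ℂ) :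
    (0 < (1 - ‖B‖ ^ 2) / (1 + ‖B‖ ^ 2) ∧
      ∀ w ∈ W,
        (((1 - ‖B‖ ^ 2) / (1 + ‖B‖ ^ 2) * (‖w.1‖ ^ 2 + ‖w.2‖ ^ 2) : ℝ) : ℂ)
          ≤ -Complex.I * symp w w) ∧
    ∀ v ∈ (Set.univ : Set (Hp × Hm)) \ W,
      ∃ w ∈ Submodule.span ℂ (W ∪ {v}),
        w ≠ 0 ∧ -Complex.I * symp w w ≤ 0 := by
  have hB0 : (0:ℝ) ≤ ‖B‖ := norm_nonneg _
  have key : ∀ a : Hp × Hm, -Complex.I * symp a a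
      = ((‖a.1‖^2 - ‖a.2‖^2 : ℝ) : ℂ) := by
    intro a
    rw [hsymp]
    rw [inner_self_eq_norm_sq_to_K (𝕜 := ℂ) a.1, inner_self_eq_norm_sq_to_K (𝕜 := ℂ) a.2]
    show -Complex.I * ((Complex.I * (‖a.1‖:ℂ)^2) - Complex.I * (‖a.2‖:ℂ)^2)
      = ((‖a.1‖^2 - ‖a.2‖^2 : ℝ) : ℂ)
    push_cast
    linear_combination (-(‖a.1‖:ℂ)^2 + (‖a.2‖:ℂ)^2) * Complex.I_sq
  constructor
  · constructor
    · apply div_pos <;> nlinarith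
    · intro w hw
      rw [hW] at hw
      obtain ⟨x, rfl⟩ := hw
      rw [key]
      rw [Complex.real_le_real]
      simp only
      have hbx : ‖B x‖ ≤ ‖B‖ * ‖x‖ := B.le_opNorm x
      have hbx2 : ‖B x‖^2 ≤ ‖B‖^2 * ‖x‖^2 := by nlinarith [norm_nonneg (B x), norm_nonneg x]
      rw [div_mul_eq_mul_div, div_le_iff₀ (by nlinarith)]
      nlinarith [norm_nonneg x, norm_nonneg (B x)]
  · intro v hv
    refine ⟨v - (v.1, B v.1), ?_, ?_, ?_⟩
    · apply Submodule.sub_mem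
      · exact Submodule.subset_span (Or.inr rfl)
      · apply Submodule.subset_span
        left
        rw [hW]
        exact ⟨v.1, rfl⟩
    · intro h
      apply hv.2
      rw [hW]
      refine ⟨v.1, ?_⟩
      have := sub_eq_zero.mp h
      exact this
    · rw [key]
      simp only [Prod.fst_sub, Prod.snd_sub]
      have : ((‖v.1 - v.1‖^2 - ‖v.2 - B v.1‖^2 : ℝ) : ℂ) ≤ ((0:ℝ) : ℂ) := by
        rw [Complex.real_le_real]
        simp only [sub_self, norm_zero]
        nlinarith [sq_nonneg ‖v.2 - B v.1‖]
      simpa using this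
end

section
/- Let B : H₊ → H₋ be a bounded linear operator which is a pure contraction (‖Bx‖ < ‖x‖ for all nonzero x) with ‖B‖ = 1. Let W := {(x, Bx) : x ∈ H₊} and W' := {(B*y, y) : y ∈ H₋} (which is the symplectic orthogonal of W with respect to the standard symplectic form). Then W ∩ W' = {0}, the algebraic sum W + W' is dense in H₊ × H₋, and W + W' ≠ H₊ × H₋. -/
/-!
The sum `W + W'` is the range of `T (x, y) = (x, B x) + (B† y, y)`. On the Hilbert direct sum
`H₊ ⊕ H₋` the operator `T` is self-adjoint, and `T (x, y) = 0` forces `B† B x = x`, which for a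
pure contraction means `x = 0`; so `T` is injective and its range is dense. If `T` were onto, so
would be the injective operator `1 - B† B`, which would then have a bounded inverse. But
`‖x - B† B x‖² ≤ ‖x‖² - ‖B x‖²`, and `‖B‖ = 1` makes the right-hand side arbitrarily small
compared with `‖x‖²`.
-/

open scoped InnerProductSpace
open ContinuousLinearMap

section

variable {𝕜 E F : Type*} [RCLike 𝕜]
  [NormedAddCommGroup E] [InnerProductSpace 𝕜 E] [CompleteSpace E]
  [NormedAddCommGroup F] [InnerProductSpace 𝕜 F] [CompleteSpace F]

theorem denseRange_of_inner_add_inner_eq_zero {G : Type*} [AddCommGroup G] [Module 𝕜 G]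
    (T : G →ₗ[𝕜] E × F)
    (h : ∀ u v, (∀ g, ⟪(T g).1, u⟫_𝕜 + ⟪(T g).2, v⟫_𝕜 = 0) → u = 0 ∧ v = 0) :
    DenseRange T := by
  let φ := WithLp.prodContinuousLinearEquiv 2 𝕜 E F
  let T₂ : G →ₗ[𝕜] WithLp 2 (E × F) := φ.symm.toLinearMap ∘ₗ T
  have hT₂ : DenseRange T₂ := by
    rw [DenseRange, ← LinearMap.coe_range, Submodule.dense_iff_topologicalClosure_eq_top,
      Submodule.topologicalClosure_eq_top_iff, Submodule.eq_bot_iff]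
    intro q hq
    obtain ⟨hu, hv⟩ := h q.ofLp.1 q.ofLp.2 fun g => by
      simpa [T₂, φ, WithLp.prod_inner_apply] using
        (Submodule.mem_orthogonal _ _).mp hq (T₂ g) (LinearMap.mem_range_self T₂ g)
    exact WithLp.ofLp_injective 2 (Prod.ext hu hv)
  have hT : (T : G → E × F) = φ ∘ T₂ := by ext <;> simp [T₂]
  rw [DenseRange, hT]
  exact φ.surjective.denseRange.comp hT₂ φ.continuous

namespace ContinuousLinearMap

variable (B : E →L[𝕜] F)

theorem eq_zero_of_adjoint_apply_apply_eq_self (hpure : ∀ x, x ≠ 0 → ‖B x‖ < ‖x‖) {x : E}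
    (hx : adjoint B (B x) = x) : x = 0 := by
  by_contra hx₀
  have : ‖B x‖ ^ 2 = ‖x‖ ^ 2 := by
    rw [apply_norm_sq_eq_inner_adjoint_left, comp_apply, hx, inner_self_eq_norm_sq]
  exact (hpure x hx₀).ne ((pow_left_inj₀ (norm_nonneg _) (norm_nonneg _) two_ne_zero).mp this)

theorem norm_sub_adjoint_apply_apply_sq_le (hB : ‖B‖ ≤ 1) (x : E) :
    ‖x - adjoint B (B x)‖ ^ 2 ≤ ‖x‖ ^ 2 - ‖B x‖ ^ 2 := by
  have hre : RCLike.re ⟪x, adjoint B (B x)⟫_𝕜 = ‖B x‖ ^ 2 :=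
    (apply_norm_sq_eq_inner_adjoint_right B x).symm
  have hle : ‖adjoint B (B x)‖ ≤ ‖B x‖ := by
    calc ‖adjoint B (B x)‖ ≤ ‖adjoint B‖ * ‖B x‖ := le_opNorm _ _
      _ ≤ ‖B x‖ := by
        rw [LinearIsometryEquiv.norm_map]
        exact mul_le_of_le_one_left (norm_nonneg _) hB
  rw [norm_sub_sq (𝕜 := 𝕜), hre]
  nlinarith [norm_nonneg (adjoint B (B x))]

theorem not_bijective_one_sub_adjoint_comp_self (hB : ‖B‖ = 1) :
    ¬ Function.Bijective (1 - adjoint B ∘L B : E →L[𝕜] E) := by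
  intro hbij
  let e := ContinuousLinearEquiv.ofBijective (1 - adjoint B ∘L B)
    (LinearMap.ker_eq_bot.mpr hbij.1) (LinearMap.range_eq_top.mpr hbij.2)
  obtain ⟨C, hC, hbound⟩ := (e.symm : E →L[𝕜] E).bound
  set c := 1 - (C ^ 2)⁻¹
  have hsq : ∀ x, ‖B x‖ ^ 2 ≤ c * ‖x‖ ^ 2 := fun x => by
    have hx : ‖x‖ ≤ C * ‖x - adjoint B (B x)‖ := by
      have := hbound (e x)
      rw [ContinuousLinearEquiv.coe_coe, e.symm_apply_apply] at this
      simpa [e] using this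
    have hx' : ‖x‖ ^ 2 / C ^ 2 ≤ ‖x - adjoint B (B x)‖ ^ 2 := by
      rw [div_le_iff₀ (by positivity), ← mul_pow, mul_comm]
      exact pow_le_pow_left₀ (norm_nonneg _) hx 2
    have hc : c * ‖x‖ ^ 2 = ‖x‖ ^ 2 - ‖x‖ ^ 2 / C ^ 2 := by ring
    linarith [norm_sub_adjoint_apply_apply_sq_le B hB.le x]
  have hnorm : ‖B‖ ≤ √c := opNorm_le_bound _ (Real.sqrt_nonneg c) fun x => by
    calc ‖B x‖ = √(‖B x‖ ^ 2) := (Real.sqrt_sq (norm_nonneg _)).symm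
      _ ≤ √(c * ‖x‖ ^ 2) := Real.sqrt_le_sqrt (hsq x)
      _ = √c * ‖x‖ := by rw [Real.sqrt_mul' _ (sq_nonneg _), Real.sqrt_sq (norm_nonneg _)]
  have : √c < 1 := (Real.sqrt_lt' one_pos).mpr <| by
    simp only [c, one_pow, sub_lt_self_iff, inv_pos]
    positivity
  linarith

noncomputable def graphAddAdjointGraph : E × F →L[𝕜] E × F :=
  (fst 𝕜 E F + adjoint B ∘L snd 𝕜 E F).prod (B ∘L fst 𝕜 E F + snd 𝕜 E F)

@[simp]
theorem graphAddAdjointGraph_apply (p : E × F) :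
    graphAddAdjointGraph B p = (p.1 + adjoint B p.2, B p.1 + p.2) := rfl

theorem inner_graphAddAdjointGraph (p q : E × F) :
    ⟪(graphAddAdjointGraph B p).1, q.1⟫_𝕜 + ⟪(graphAddAdjointGraph B p).2, q.2⟫_𝕜 =
      ⟪p.1, (graphAddAdjointGraph B q).1⟫_𝕜 + ⟪p.2, (graphAddAdjointGraph B q).2⟫_𝕜 := by
  simp only [graphAddAdjointGraph_apply, inner_add_left, inner_add_right, adjoint_inner_left,
    adjoint_inner_right]
  ring

variable {B}

theorem injective_graphAddAdjointGraph (hpure : ∀ x, x ≠ 0 → ‖B x‖ < ‖x‖) :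
    Function.Injective (graphAddAdjointGraph B) := by
  rw [injective_iff_map_eq_zero]
  rintro ⟨x, y⟩ h
  simp only [graphAddAdjointGraph_apply, Prod.mk_eq_zero] at h
  obtain ⟨h₁, h₂⟩ := h
  have hy : y = -B x := eq_neg_of_add_eq_zero_right h₂
  have hx : x = 0 := eq_zero_of_adjoint_apply_apply_eq_self B hpure
    (sub_eq_zero.mp (by simpa [hy, sub_eq_add_neg] using h₁)).symm
  simp [hx, hy]

theorem denseRange_graphAddAdjointGraph (hpure : ∀ x, x ≠ 0 → ‖B x‖ < ‖x‖) :
    DenseRange (graphAddAdjointGraph B) := by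
  refine denseRange_of_inner_add_inner_eq_zero (graphAddAdjointGraph B).toLinearMap
    fun u v h => ?_
  set q := graphAddAdjointGraph B (u, v)
  have hq : ∀ p : E × F, ⟪p.1, q.1⟫_𝕜 + ⟪p.2, q.2⟫_𝕜 = 0 := fun p =>
    (inner_graphAddAdjointGraph B p (u, v)).symm.trans (h p)
  have hq₁ := hq (q.1, 0)
  have hq₂ := hq (0, q.2)
  simp only [inner_zero_left, add_zero, zero_add, inner_self_eq_zero] at hq₁ hq₂
  simpa using injective_graphAddAdjointGraph hpure (show q = graphAddAdjointGraph B 0 by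
    simp [Prod.ext_iff, hq₁, hq₂])

theorem not_surjective_graphAddAdjointGraph (hpure : ∀ x, x ≠ 0 → ‖B x‖ < ‖x‖)
    (hB : ‖B‖ = 1) : ¬ Function.Surjective (graphAddAdjointGraph B) := by
  intro hsurj
  refine not_bijective_one_sub_adjoint_comp_self B hB ⟨?_, fun a => ?_⟩
  · rw [injective_iff_map_eq_zero]
    intro x hx
    exact eq_zero_of_adjoint_apply_apply_eq_self B hpure (sub_eq_zero.mp hx).symm
  · obtain ⟨⟨x, y⟩, hxy⟩ := hsurj (a, 0)
    simp only [graphAddAdjointGraph_apply, Prod.mk.injEq] at hxy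
    obtain ⟨rfl, hy⟩ := hxy
    obtain rfl := eq_neg_of_add_eq_zero_right hy
    exact ⟨x, by simp [sub_eq_add_neg]⟩

end ContinuousLinearMap

end

/-- If `B : H₊ →L[ℂ] H₋` is a pure contraction (`‖Bx‖ < ‖x‖` for
all `x ≠ 0`) with `‖B‖ = 1`, then for `W = {(x, Bx)}` and `W' = {(B*y, y)}`
(the symplectic orthogonal of `W`) one has `W ∩ W' = {0}`, the algebraic sum
`W + W'` is dense in `H₊ × H₋`, and `W + W' ≠ H₊ × H₋`. -/
theorem graph_sum_adjointGraph_dense_proper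
    {Hp Hm : Type*}
    [NormedAddCommGroup Hp] [InnerProductSpace ℂ Hp] [CompleteSpace Hp]
    [NormedAddCommGroup Hm] [InnerProductSpace ℂ Hm] [CompleteSpace Hm]
    (B : Hp →L[ℂ] Hm)
    (hpure : ∀ x : Hp, x ≠ 0 → ‖B x‖ < ‖x‖) (hnorm : ‖B‖ = 1)
    (W W' S : Set (Hp × Hm))
    (hW : W = {p : Hp × Hm | ∃ x : Hp, p = (x, B x)})
    (hW' : W' = {p : Hp × Hm | ∃ y : Hm, p = (ContinuousLinearMap.adjoint B y, y)})
    (hS : S = {p : Hp × Hm | ∃ w ∈ W, ∃ w' ∈ W', p = w + w'}) :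
    W ∩ W' = {0} ∧ Dense S ∧ S ≠ Set.univ := by
  have hS_range : S = Set.range (graphAddAdjointGraph B) := by
    subst hS hW hW'
    ext p
    constructor
    · rintro ⟨_, ⟨x, rfl⟩, _, ⟨y, rfl⟩, rfl⟩
      exact ⟨(x, y), by simp [add_comm]⟩
    · rintro ⟨⟨x, y⟩, rfl⟩
      exact ⟨_, ⟨x, rfl⟩, _, ⟨y, rfl⟩, by simp [add_comm]⟩
  refine ⟨?_, hS_range ▸ denseRange_graphAddAdjointGraph hpure, hS_range ▸ fun h =>
    not_surjective_graphAddAdjointGraph hpure hnorm (Set.range_eq_univ.mp h)⟩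
  subst hW hW'
  ext p
  simp only [Set.mem_inter_iff, Set.mem_ofPred_eq, Set.mem_singleton_iff]
  constructor
  · rintro ⟨⟨x, rfl⟩, y, hxy⟩
    obtain ⟨hx, rfl⟩ := Prod.mk.inj hxy
    simp [eq_zero_of_adjoint_apply_apply_eq_self B hpure hx.symm]
  · rintro rfl
    exact ⟨⟨0, by simp [Prod.ext_iff]⟩, ⟨0, by simp [Prod.ext_iff]⟩⟩
end

section
/- Let T be a contraction on H, K := ker(Id − T*T), K⋆ := ker(Id − TT*), and A_T := {(x, Tx) : x ∈ K} ⊆ H × H. Then the symplectic orthogonal of A_T with respect to the standard symplectic form satisfies A_T^⊥s = {(y₁, y₂) ∈ H × H : y₁ − T*y₂ ∈ K^⊥} = {(y₁, y₂) ∈ H × H : Ty₁ − y₂ ∈ K⋆^⊥}. -/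
open scoped InnerProductSpace
open ContinuousLinearMap

/-!
Pairing `y` with `(x, T x)` symplectically gives `i(⟪x, y₁⟫ - ⟪T x, y₂⟫)`, and
`⟪x, y₁⟫ - ⟪T x, y₂⟫ = ⟪x, y₁ - T* y₂⟫`, so `y ∈ A_Tᗮˢ` iff `y₁ - T* y₂ ⊥ K`.
Since `T* T = 1` on `K`, `T` maps `K` onto `K⋆` (with inverse `T*`), and the same quantity
equals `⟪T* T x, y₁⟫ - ⟪T x, y₂⟫ = ⟪T x, T y₁ - y₂⟫`; hence also `y ∈ A_Tᗮˢ` iff `T y₁ - y₂ ⊥ K⋆`.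
-/

section FixedPoints

variable {R M N : Type*} [Ring R] [AddCommGroup M] [Module R M] [TopologicalSpace M]
  [IsTopologicalAddGroup M] [AddCommGroup N] [Module R N] [TopologicalSpace N]
  [IsTopologicalAddGroup N]

theorem ContinuousLinearMap.mem_ker_one_sub_iff {S : M →L[R] M} {x : M} :
    x ∈ LinearMap.ker ((1 - S : M →L[R] M) : M →ₗ[R] M) ↔ S x = x := by
  rw [LinearMap.mem_ker, coe_coe, sub_apply, one_apply_eq_self, sub_eq_zero, eq_comm]

theorem ContinuousLinearMap.map_ker_one_sub_comp (A : M →L[R] N) (B : N →L[R] M) :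
    (LinearMap.ker ((1 - B ∘L A : M →L[R] M) : M →ₗ[R] M)).map (A : M →ₗ[R] N) =
      LinearMap.ker ((1 - A ∘L B : N →L[R] N) : N →ₗ[R] N) := by
  ext u
  simp only [Submodule.mem_map, mem_ker_one_sub_iff, comp_apply, coe_coe]
  constructor
  · rintro ⟨x, hx, rfl⟩
    rw [hx]
  · intro hu
    exact ⟨B u, by rw [hu], hu⟩

end FixedPoints

section Graph

variable {E F : Type*} [NormedAddCommGroup E] [InnerProductSpace ℂ E] [CompleteSpace E]
  [NormedAddCommGroup F] [InnerProductSpace ℂ F] [CompleteSpace F]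

theorem sub_adjoint_mem_orthogonal_iff (T : E →L[ℂ] F) (K : Submodule ℂ E) (y : E × F) :
    y.1 - adjoint T y.2 ∈ Kᗮ ↔ ∀ x ∈ K, ⟪x, y.1⟫_ℂ = ⟪T x, y.2⟫_ℂ := by
  simp only [Submodule.mem_orthogonal, inner_sub_right, adjoint_inner_right, sub_eq_zero]

theorem apply_sub_mem_orthogonal_map_iff (T : E →L[ℂ] F) (K : Submodule ℂ E)
    (hK : ∀ x ∈ K, adjoint T (T x) = x) (y : E × F) :
    T y.1 - y.2 ∈ (K.map (T : E →ₗ[ℂ] F))ᗮ ↔ ∀ x ∈ K, ⟪x, y.1⟫_ℂ = ⟪T x, y.2⟫_ℂ := by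
  simp only [Submodule.mem_orthogonal, Submodule.mem_map, forall_exists_index, and_imp,
    forall_apply_eq_imp_iff₂]
  refine forall₂_congr fun x hx => ?_
  rw [coe_coe, inner_sub_right, sub_eq_zero, ← adjoint_inner_left, hK x hx]

end Graph

theorem symplecticOrthogonal_of_unitary_part_graph_general
    {H : Type*} [NormedAddCommGroup H] [InnerProductSpace ℂ H] [CompleteSpace H]
    (T : H →L[ℂ] H)
    (K Ks : Submodule ℂ H)
    (hK : K = LinearMap.ker ((1 - adjoint T ∘L T : H →L[ℂ] H) : H →ₗ[ℂ] H))
    (hKs : Ks = LinearMap.ker ((1 - T ∘L adjoint T : H →L[ℂ] H) : H →ₗ[ℂ] H))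
    (AT : Set (H × H)) (hAT : AT = {p : H × H | ∃ x ∈ K, p = (x, T x)})
    (ATs : Set (H × H))
    (hATs : ATs = {a : H × H | ∀ b ∈ AT,
      Complex.I * ⟪b.1, a.1⟫_ℂ - Complex.I * ⟪b.2, a.2⟫_ℂ = 0}) :
    ATs = {y : H × H | y.1 - adjoint T y.2 ∈ Kᗮ} ∧
    ATs = {y : H × H | T y.1 - y.2 ∈ Ksᗮ} := by
  have hATs_eq : ATs = {y : H × H | ∀ x ∈ K, ⟪x, y.1⟫_ℂ = ⟪T x, y.2⟫_ℂ} := by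
    subst hATs hAT
    ext y
    simp only [Set.mem_ofPred_eq, forall_exists_index, and_imp, ← mul_sub, mul_eq_zero,
      Complex.I_ne_zero, false_or, sub_eq_zero]
    exact ⟨fun h x hx => h _ x hx rfl, fun h _ x hx hb => hb ▸ h x hx⟩
  have hKs_eq_map : Ks = K.map (T : H →ₗ[ℂ] H) := by
    rw [hKs, hK, map_ker_one_sub_comp]
  have hTK : ∀ x ∈ K, adjoint T (T x) = x := fun x hx =>
    mem_ker_one_sub_iff.mp (hK ▸ hx)
  subst hATs_eq hKs_eq_map
  exact ⟨Set.ext fun y => (sub_adjoint_mem_orthogonal_iff T K y).symm,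
    Set.ext fun y => (apply_sub_mem_orthogonal_map_iff T K hTK y).symm⟩

/-- For a contraction `T` on `H`, `K = ker(Id − T*T)`,
`K⋆ = ker(Id − TT*)` and `A_T = {(x, Tx) : x ∈ K}`, the symplectic orthogonal
of `A_T` with respect to the standard symplectic form
`[a,b] = i⟨a₁,b₁⟩ − i⟨a₂,b₂⟩` (inner products linear in the first variable)
equals `{(y₁,y₂) : y₁ − T*y₂ ∈ K^⊥}` and equals `{(y₁,y₂) : Ty₁ − y₂ ∈ K⋆^⊥}`. -/
theorem symplecticOrthogonal_of_unitary_part_graph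
    {H : Type*} [NormedAddCommGroup H] [InnerProductSpace ℂ H] [CompleteSpace H]
    (T : H →L[ℂ] H) (hT : ‖T‖ ≤ 1)
    (K Ks : Submodule ℂ H)
    (hK : K = LinearMap.ker ((1 - adjoint T ∘L T : H →L[ℂ] H) : H →ₗ[ℂ] H))
    (hKs : Ks = LinearMap.ker ((1 - T ∘L adjoint T : H →L[ℂ] H) : H →ₗ[ℂ] H))
    (AT : Set (H × H)) (hAT : AT = {p : H × H | ∃ x ∈ K, p = (x, T x)})
    (ATs : Set (H × H))
    (hATs : ATs = {a : H × H | ∀ b ∈ AT,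
      Complex.I * ⟪b.1, a.1⟫_ℂ - Complex.I * ⟪b.2, a.2⟫_ℂ = 0}) :
    ATs = {y : H × H | y.1 - adjoint T y.2 ∈ Kᗮ} ∧
    ATs = {y : H × H | T y.1 - y.2 ∈ Ksᗮ} :=
  symplecticOrthogonal_of_unitary_part_graph_general T K Ks hK hKs AT hAT ATs hATs
end

section
/- Let T be a contraction on H, K := ker(Id − T*T), K⋆ := ker(Id − TT*), A_T := {(x, Tx) : x ∈ K} ⊆ H × H, Q := K^⊥ × {0} and Q⋆ := {0} × K⋆^⊥. Then A_T, Q and Q⋆ are pairwise orthogonal closed subspaces of the Hilbert space H × H and A_T^⊥s = A_T ⊕ Q ⊕ Q⋆ (an orthogonal direct sum), where A_T^⊥s is the symplectic orthogonal of A_T with respect to the standard symplectic form. -/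
/-!
Testing the symplectic condition against the vectors `(y, T y)`, `y ∈ K`, shows that `p` lies in
`A_T^⊥s` exactly when `p₁ - T* p₂ ⊥ K`. Now `T` maps `K` into `K⋆` and `T*` maps `K⋆` back into `K`,
with `T T* = id` on `K⋆`; dually `T*` maps `K⋆ᗮ` into `Kᗮ`. So splitting `p₂ = s + r` along
`K⋆ ⊕ K⋆ᗮ` and putting `x = T* s ∈ K` gives `T x = s` and
`p₁ - x = (p₁ - T* p₂) + T* r ∈ Kᗮ`, i.e. `p = (x, T x) + (p₁ - x, 0) + (0, r)`.
-/

open scoped InnerProductSpace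
open ContinuousLinearMap

theorem IsClosed.graphOn {X Y : Type*} [TopologicalSpace X] [TopologicalSpace Y] [T2Space Y]
    {s : Set X} {f : X → Y} (hs : IsClosed s) (hf : Continuous f) : IsClosed (s.graphOn f) := by
  have : s.graphOn f = Prod.fst ⁻¹' s ∩ {p | f p.1 = p.2} := by ext; simp
  rw [this]
  exact (hs.preimage continuous_fst).inter (isClosed_eq (hf.comp continuous_fst) continuous_snd)

theorem Submodule.isClosed_prod {R M N : Type*} [Semiring R] [AddCommMonoid M] [Module R M]
    [AddCommMonoid N] [Module R N] [TopologicalSpace M] [TopologicalSpace N]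
    {U : Submodule R M} {V : Submodule R N} (hU : IsClosed (U : Set M))
    (hV : IsClosed (V : Set N)) : IsClosed (U.prod V : Set (M × N)) := by
  rw [Submodule.prod_coe]; exact hU.prod hV

theorem Submodule.inner_fst_add_inner_snd_eq_zero {𝕜 E F : Type*} [RCLike 𝕜]
    [NormedAddCommGroup E] [InnerProductSpace 𝕜 E] [NormedAddCommGroup F] [InnerProductSpace 𝕜 F]
    {U : Submodule 𝕜 E} {V : Submodule 𝕜 F}
    {a b : E × F} (ha : a ∈ U.prod V) (hb : b ∈ Uᗮ.prod Vᗮ) : ⟪a.1, b.1⟫_𝕜 + ⟪a.2, b.2⟫_𝕜 = 0 := by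
  rw [Submodule.mem_prod] at ha hb
  rw [Submodule.inner_right_of_mem_orthogonal ha.1 hb.1,
    Submodule.inner_right_of_mem_orthogonal ha.2 hb.2, add_zero]

namespace ContinuousLinearMap

section fixedSubspace
variable {R M : Type*} [Ring R] [AddCommGroup M] [Module R M] [TopologicalSpace M]
  [IsTopologicalAddGroup M]

def fixedSubspace (S : M →L[R] M) : Submodule R M :=
  LinearMap.ker ((1 - S : M →L[R] M) : M →ₗ[R] M)

theorem mem_fixedSubspace {S : M →L[R] M} {x : M} : x ∈ S.fixedSubspace ↔ S x = x := by
  rw [fixedSubspace, LinearMap.mem_ker, coe_coe, sub_apply, one_apply_eq_self, sub_eq_zero, eq_comm]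

theorem isClosed_fixedSubspace [T1Space M] (S : M →L[R] M) :
    IsClosed (S.fixedSubspace : Set M) :=
  isClosed_ker _

end fixedSubspace

variable {𝕜 E F : Type*} [RCLike 𝕜] [NormedAddCommGroup E] [InnerProductSpace 𝕜 E]
  [CompleteSpace E] [NormedAddCommGroup F] [InnerProductSpace 𝕜 F] [CompleteSpace F]

theorem adjoint_apply_mem_orthogonal (T : E →L[𝕜] F) {U : Submodule 𝕜 E} {V : Submodule 𝕜 F}
    (hUV : ∀ x ∈ U, T x ∈ V) {r : F} (hr : r ∈ Vᗮ) : adjoint T r ∈ Uᗮ := fun x hx => by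
  rw [adjoint_inner_right]; exact hr (T x) (hUV x hx)

theorem apply_mem_fixedSubspace_comp_adjoint (T : E →L[𝕜] F) {x : E}
    (hx : x ∈ (adjoint T ∘L T).fixedSubspace) : T x ∈ (T ∘L adjoint T).fixedSubspace := by
  rw [mem_fixedSubspace, comp_apply] at hx ⊢
  rw [hx]

theorem adjoint_apply_mem_fixedSubspace_adjoint_comp (T : E →L[𝕜] F) {y : F}
    (hy : y ∈ (T ∘L adjoint T).fixedSubspace) : adjoint T y ∈ (adjoint T ∘L T).fixedSubspace := by
  simpa using apply_mem_fixedSubspace_comp_adjoint (adjoint T) (by simpa using hy)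

theorem graphOn_fixedSubspace_subset_prod (T : E →L[𝕜] F) :
    ((adjoint T ∘L T).fixedSubspace : Set E).graphOn T ⊆
      ((adjoint T ∘L T).fixedSubspace.prod (T ∘L adjoint T).fixedSubspace : Set (E × F)) := by
  intro p hp
  rw [Set.mem_graphOn] at hp
  exact ⟨hp.1, hp.2 ▸ apply_mem_fixedSubspace_comp_adjoint T hp.1⟩

theorem fst_sub_adjoint_snd_mem_orthogonal_iff (T : E →L[𝕜] E) (p : E × E) :
    p.1 - adjoint T p.2 ∈ (adjoint T ∘L T).fixedSubspaceᗮ ↔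
      ∃ a ∈ ((adjoint T ∘L T).fixedSubspace : Set E).graphOn T,
      ∃ q ∈ (adjoint T ∘L T).fixedSubspaceᗮ.prod ⊥,
      ∃ r ∈ (⊥ : Submodule 𝕜 E).prod (T ∘L adjoint T).fixedSubspaceᗮ, p = a + q + r := by
  set K := (adjoint T ∘L T).fixedSubspace
  set Ks := (T ∘L adjoint T).fixedSubspace
  have hT : ∀ x ∈ K, T x ∈ Ks := fun _ => apply_mem_fixedSubspace_comp_adjoint T
  constructor
  · intro hp
    have : CompleteSpace Ks := (isClosed_fixedSubspace _).completeSpace_coe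
    obtain ⟨s, hs, r, hr, hsr⟩ := Ks.exists_add_mem_mem_orthogonal p.2
    have hTs : T (adjoint T s) = s := mem_fixedSubspace.1 hs
    refine ⟨_, ⟨adjoint T s, adjoint_apply_mem_fixedSubspace_adjoint_comp T hs, rfl⟩,
      (p.1 - adjoint T s, 0), ⟨?_, rfl⟩, (0, r), ⟨rfl, hr⟩, ?_⟩
    · have : p.1 - adjoint T s = (p.1 - adjoint T p.2) + adjoint T r := by
        rw [hsr, map_add]; abel
      rw [this]
      exact add_mem hp (adjoint_apply_mem_orthogonal T hT hr)
    · ext <;> simp [hsr, hTs]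
  · rintro ⟨_, ⟨x, hx, rfl⟩, ⟨q, _⟩, ⟨hq, rfl⟩, ⟨_, r⟩, ⟨rfl, hr⟩, rfl⟩
    have hx' : adjoint T (T x) = x := mem_fixedSubspace.1 hx
    have : x + q + 0 - adjoint T (T x + 0 + r) = q - adjoint T r := by
      rw [map_add, map_add, hx', map_zero]
      abel
    change x + q + 0 - adjoint T (T x + 0 + r) ∈ Kᗮ
    rw [this]
    exact sub_mem hq (adjoint_apply_mem_orthogonal T hT hr)

end ContinuousLinearMap

section
variable {E F : Type*} [NormedAddCommGroup E] [InnerProductSpace ℂ E] [CompleteSpace E]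
  [NormedAddCommGroup F] [InnerProductSpace ℂ F] [CompleteSpace F]

theorem forall_mem_graphOn_symplectic_eq_zero_iff (T : E →L[ℂ] F) (K : Submodule ℂ E) (p : E × F) :
    (∀ b ∈ (K : Set E).graphOn T, Complex.I * ⟪b.1, p.1⟫_ℂ - Complex.I * ⟪b.2, p.2⟫_ℂ = 0) ↔
      p.1 - adjoint T p.2 ∈ Kᗮ := by
  simp only [Set.graphOn, Set.forall_mem_image, SetLike.mem_coe, ← mul_sub, mul_eq_zero,
    Complex.I_ne_zero, false_or, Submodule.mem_orthogonal, inner_sub_right, adjoint_inner_right]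

end

theorem symplecticOrthogonal_orthogonal_decomposition_general
    {H : Type*} [NormedAddCommGroup H] [InnerProductSpace ℂ H] [CompleteSpace H]
    (T : H →L[ℂ] H)
    (K Ks : Submodule ℂ H)
    (hK : K = LinearMap.ker ((1 - adjoint T ∘L T : H →L[ℂ] H) : H →ₗ[ℂ] H))
    (hKs : Ks = LinearMap.ker ((1 - T ∘L adjoint T : H →L[ℂ] H) : H →ₗ[ℂ] H))
    (AT Q Qs : Submodule ℂ (H × H))
    (hAT : (AT : Set (H × H)) = {p : H × H | ∃ x ∈ K, p = (x, T x)})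
    (hQ : Q = Kᗮ.prod (⊥ : Submodule ℂ H))
    (hQs : Qs = (⊥ : Submodule ℂ H).prod Ksᗮ)
    (ATs : Set (H × H))
    (hATs : ATs = {a : H × H | ∀ b ∈ (AT : Set (H × H)),
      Complex.I * ⟪b.1, a.1⟫_ℂ - Complex.I * ⟪b.2, a.2⟫_ℂ = 0}) :
    (∀ a ∈ AT, ∀ b ∈ Q, ⟪a.1, b.1⟫_ℂ + ⟪a.2, b.2⟫_ℂ = 0) ∧
    (∀ a ∈ AT, ∀ b ∈ Qs, ⟪a.1, b.1⟫_ℂ + ⟪a.2, b.2⟫_ℂ = 0) ∧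
    (∀ a ∈ Q, ∀ b ∈ Qs, ⟪a.1, b.1⟫_ℂ + ⟪a.2, b.2⟫_ℂ = 0) ∧
    IsClosed (AT : Set (H × H)) ∧ IsClosed (Q : Set (H × H)) ∧
    IsClosed (Qs : Set (H × H)) ∧
    ATs = {p : H × H | ∃ a ∈ AT, ∃ q ∈ Q, ∃ r ∈ Qs, p = a + q + r} := by
  obtain rfl : K = (adjoint T ∘L T).fixedSubspace := hK
  obtain rfl : Ks = (T ∘L adjoint T).fixedSubspace := hKs
  subst hQ hQs hATs
  set K := (adjoint T ∘L T).fixedSubspace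
  set Ks := (T ∘L adjoint T).fixedSubspace
  replace hAT (a : H × H) : a ∈ AT ↔ a ∈ (K : Set H).graphOn T := by
    rw [← SetLike.mem_coe, hAT, Set.graphOn, Set.mem_image]
    exact exists_congr fun x => and_congr_right fun _ => eq_comm
  have hAT_le : ∀ a ∈ AT, a ∈ K.prod Ks := fun a ha =>
    graphOn_fixedSubspace_subset_prod T ((hAT a).1 ha)
  have hbot : IsClosed ((⊥ : Submodule ℂ H) : Set H) := by simp
  refine ⟨fun a ha b hb => ?_, fun a ha b hb => ?_, fun a ha b hb => ?_, Set.ext hAT ▸ ?_,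
    Submodule.isClosed_prod (Submodule.isClosed_orthogonal _) hbot,
    Submodule.isClosed_prod hbot (Submodule.isClosed_orthogonal _), ?_⟩
  · exact Submodule.inner_fst_add_inner_snd_eq_zero (hAT_le a ha)
      (Submodule.prod_mono le_rfl bot_le hb)
  · exact Submodule.inner_fst_add_inner_snd_eq_zero (hAT_le a ha)
      (Submodule.prod_mono bot_le le_rfl hb)
  · rw [Submodule.mem_prod, Submodule.mem_bot] at ha hb
    rw [ha.2, hb.1, inner_zero_left, inner_zero_right, add_zero]
  · exact (isClosed_fixedSubspace _).graphOn T.continuous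
  · ext p
    simp only [Set.mem_ofPred_eq, SetLike.mem_coe, hAT]
    rw [forall_mem_graphOn_symplectic_eq_zero_iff, fst_sub_adjoint_snd_mem_orthogonal_iff]

/-- For a contraction `T` on `H`, with `K = ker(Id − T*T)`,
`K⋆ = ker(Id − TT*)`, `A_T = {(x,Tx) : x ∈ K}`, `Q = K^⊥ × {0}` and
`Q⋆ = {0} × K⋆^⊥`: these are pairwise orthogonal closed subspaces of the
Hilbert space `H × H` (whose inner product is `⟨a,b⟩ = ⟨a₁,b₁⟩ + ⟨a₂,b₂⟩`),
and the symplectic orthogonal `A_T^⊥s` (with respect to the standard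
symplectic form, inner products linear in the first variable) is the
orthogonal direct sum `A_T ⊕ Q ⊕ Q⋆`. -/
theorem symplecticOrthogonal_orthogonal_decomposition
    {H : Type*} [NormedAddCommGroup H] [InnerProductSpace ℂ H] [CompleteSpace H]
    (T : H →L[ℂ] H) (hT : ‖T‖ ≤ 1)
    (K Ks : Submodule ℂ H)
    (hK : K = LinearMap.ker ((1 - adjoint T ∘L T : H →L[ℂ] H) : H →ₗ[ℂ] H))
    (hKs : Ks = LinearMap.ker ((1 - T ∘L adjoint T : H →L[ℂ] H) : H →ₗ[ℂ] H))
    (AT Q Qs : Submodule ℂ (H × H))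
    (hAT : (AT : Set (H × H)) = {p : H × H | ∃ x ∈ K, p = (x, T x)})
    (hQ : Q = Kᗮ.prod (⊥ : Submodule ℂ H))
    (hQs : Qs = (⊥ : Submodule ℂ H).prod Ksᗮ)
    (ATs : Set (H × H))
    (hATs : ATs = {a : H × H | ∀ b ∈ (AT : Set (H × H)),
      Complex.I * ⟪b.1, a.1⟫_ℂ - Complex.I * ⟪b.2, a.2⟫_ℂ = 0}) :
    (∀ a ∈ AT, ∀ b ∈ Q, ⟪a.1, b.1⟫_ℂ + ⟪a.2, b.2⟫_ℂ = 0) ∧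
    (∀ a ∈ AT, ∀ b ∈ Qs, ⟪a.1, b.1⟫_ℂ + ⟪a.2, b.2⟫_ℂ = 0) ∧
    (∀ a ∈ Q, ∀ b ∈ Qs, ⟪a.1, b.1⟫_ℂ + ⟪a.2, b.2⟫_ℂ = 0) ∧
    IsClosed (AT : Set (H × H)) ∧ IsClosed (Q : Set (H × H)) ∧
    IsClosed (Qs : Set (H × H)) ∧
    ATs = {p : H × H | ∃ a ∈ AT, ∃ q ∈ Q, ∃ r ∈ Qs, p = a + q + r} :=
  symplecticOrthogonal_orthogonal_decomposition_general T K Ks hK hKs AT Q Qs hAT hQ hQs ATs hATs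
end

section
/- Let T be a contraction on H and let a, b ∈ A_T^⊥s be written according to the orthogonal decomposition A_T^⊥s = A_T ⊕ (K^⊥ × {0}) ⊕ ({0} × K⋆^⊥) as a = (x₀, Tx₀) + (a₊, 0) + (0, a₋) and b = (y₀, Ty₀) + (b₊, 0) + (0, b₋) with x₀, y₀ ∈ K, a₊, b₊ ∈ K^⊥, a₋, b₋ ∈ K⋆^⊥. Then the abstract Green formula holds: [a, b] = i⟨a₊, b₊⟩ − i⟨a₋, b₋⟩, where [·,·] is the standard symplectic form on H × H. -/
open scoped InnerProductSpace
open ContinuousLinearMap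

/-! On `K` the operator `T` is isometric (`T* T x = x`) and maps `K` into `K⋆`. Expanding
`[a, b]` bilinearly, the cross terms vanish by the orthogonality `K ⟂ K^⊥`, `K⋆ ⟂ K⋆^⊥`, and
the two contributions of `(x₀, T x₀)` and `(y₀, T y₀)` cancel because `⟨T y₀, T x₀⟩ = ⟨y₀, x₀⟩`. -/

section KernelOfDefect

variable {𝕜 E : Type*} [RCLike 𝕜] [NormedAddCommGroup E] [InnerProductSpace 𝕜 E]
  [CompleteSpace E] (T : E →L[𝕜] E) {x : E}

theorem adjoint_apply_apply_eq_of_mem_ker_one_sub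
    (hx : x ∈ LinearMap.ker ((1 - adjoint T ∘L T : E →L[𝕜] E) : E →ₗ[𝕜] E)) :
    adjoint T (T x) = x := by
  rw [LinearMap.mem_ker] at hx
  exact (sub_eq_zero.mp hx).symm

theorem apply_mem_ker_one_sub_comp_adjoint
    (hx : x ∈ LinearMap.ker ((1 - adjoint T ∘L T : E →L[𝕜] E) : E →ₗ[𝕜] E)) :
    T x ∈ LinearMap.ker ((1 - T ∘L adjoint T : E →L[𝕜] E) : E →ₗ[𝕜] E) := by
  simp [LinearMap.mem_ker, adjoint_apply_apply_eq_of_mem_ker_one_sub T hx]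

theorem inner_apply_apply_eq_of_mem_ker_one_sub (y : E)
    (hx : x ∈ LinearMap.ker ((1 - adjoint T ∘L T : E →L[𝕜] E) : E →ₗ[𝕜] E)) :
    ⟪T y, T x⟫_𝕜 = ⟪y, x⟫_𝕜 := by
  rw [← adjoint_inner_right, adjoint_apply_apply_eq_of_mem_ker_one_sub T hx]

end KernelOfDefect

theorem abstract_green_formula_general
    {H : Type*} [NormedAddCommGroup H] [InnerProductSpace ℂ H] [CompleteSpace H]
    (T : H →L[ℂ] H)
    (K Ks : Submodule ℂ H)
    (hK : K = LinearMap.ker ((1 - adjoint T ∘L T : H →L[ℂ] H) : H →ₗ[ℂ] H))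
    (hKs : Ks = LinearMap.ker ((1 - T ∘L adjoint T : H →L[ℂ] H) : H →ₗ[ℂ] H))
    (a b : H × H)
    (x₀ y₀ ap bp am bm : H)
    (hx₀ : x₀ ∈ K) (hy₀ : y₀ ∈ K) (hap : ap ∈ Kᗮ) (hbp : bp ∈ Kᗮ)
    (ham : am ∈ Ksᗮ) (hbm : bm ∈ Ksᗮ)
    (hadec : a = (x₀, T x₀) + (ap, 0) + (0, am))
    (hbdec : b = (y₀, T y₀) + (bp, 0) + (0, bm)) :
    Complex.I * ⟪b.1, a.1⟫_ℂ - Complex.I * ⟪b.2, a.2⟫_ℂ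
      = Complex.I * ⟪bp, ap⟫_ℂ - Complex.I * ⟪bm, am⟫_ℂ := by
  subst hK hKs hadec hbdec
  have hTx₀ := apply_mem_ker_one_sub_comp_adjoint T hx₀
  have hTy₀ := apply_mem_ker_one_sub_comp_adjoint T hy₀
  simp only [Prod.fst_add, Prod.snd_add, inner_add_left, inner_add_right, add_zero, zero_add,
    inner_apply_apply_eq_of_mem_ker_one_sub T y₀ hx₀,
    Submodule.inner_right_of_mem_orthogonal hy₀ hap,
    Submodule.inner_left_of_mem_orthogonal hx₀ hbp,
    Submodule.inner_right_of_mem_orthogonal hTy₀ ham,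
    Submodule.inner_left_of_mem_orthogonal hTx₀ hbm]
  ring

/-- abstract Green formula: Let `T` be a contraction on `H`,
`K = ker(Id − T*T)`, `K⋆ = ker(Id − TT*)`, and let `a, b ∈ A_T^⊥s` be
decomposed as `a = (x₀,Tx₀) + (a₊,0) + (0,a₋)`,
`b = (y₀,Ty₀) + (b₊,0) + (0,b₋)` with `x₀, y₀ ∈ K`, `a₊, b₊ ∈ K^⊥`,
`a₋, b₋ ∈ K⋆^⊥`. Then `[a,b] = i⟨a₊,b₊⟩ − i⟨a₋,b₋⟩`, where
`[a,b] = i⟨a₁,b₁⟩ − i⟨a₂,b₂⟩` is the standard symplectic form on `H × H`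
(inner products linear in the first variable). -/
theorem abstract_green_formula
    {H : Type*} [NormedAddCommGroup H] [InnerProductSpace ℂ H] [CompleteSpace H]
    (T : H →L[ℂ] H) (hT : ‖T‖ ≤ 1)
    (K Ks : Submodule ℂ H)
    (hK : K = LinearMap.ker ((1 - adjoint T ∘L T : H →L[ℂ] H) : H →ₗ[ℂ] H))
    (hKs : Ks = LinearMap.ker ((1 - T ∘L adjoint T : H →L[ℂ] H) : H →ₗ[ℂ] H))
    (ATs : Set (H × H))
    (hATs : ATs = {a : H × H | ∀ b ∈ {p : H × H | ∃ x ∈ K, p = (x, T x)},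
      Complex.I * ⟪b.1, a.1⟫_ℂ - Complex.I * ⟪b.2, a.2⟫_ℂ = 0})
    (a b : H × H) (ha : a ∈ ATs) (hb : b ∈ ATs)
    (x₀ y₀ ap bp am bm : H)
    (hx₀ : x₀ ∈ K) (hy₀ : y₀ ∈ K) (hap : ap ∈ Kᗮ) (hbp : bp ∈ Kᗮ)
    (ham : am ∈ Ksᗮ) (hbm : bm ∈ Ksᗮ)
    (hadec : a = (x₀, T x₀) + (ap, 0) + (0, am))
    (hbdec : b = (y₀, T y₀) + (bp, 0) + (0, bm)) :
    Complex.I * ⟪b.1, a.1⟫_ℂ - Complex.I * ⟪b.2, a.2⟫_ℂ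
      = Complex.I * ⟪bp, ap⟫_ℂ - Complex.I * ⟪bm, am⟫_ℂ :=
  abstract_green_formula_general T K Ks hK hKs a b x₀ y₀ ap bp am bm hx₀ hy₀ hap hbp ham hbm hadec
    hbdec
end

section
/- Let T be a contraction on H and for λ ∈ ℂ set W_λ := {(x, λx) : x ∈ H} ⊆ H × H. Then for every λ with |λ| < 1 (so that Id − λT* is boundedly invertible), W_λ ∩ A_T^⊥s = {((Id − λT*)⁻¹f, λ(Id − λT*)⁻¹f) : f ∈ K^⊥}. -/
open scoped InnerProductSpace
open ContinuousLinearMap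

/-!
Since `‖λ T*‖ < 1`, the operator `A := 1 - λ T*` is invertible (Neumann series). For `k ∈ K`,
moving `T` across the inner product gives
`[(k, T k), (x, λ x)] = i ⟪k, x⟫ - i ⟪T k, λ x⟫ = i ⟪k, A x⟫`,
so `(x, λ x)` lies in `A_T^⊥s` exactly when `A x ∈ K^⊥`, i.e. when `x = A⁻¹ f` with `f ∈ K^⊥`.
-/

theorem isUnit_one_sub_smul_of_norm_le_one {𝕜 R : Type*} [NormedField 𝕜] [NormedRing R]
    [NormedSpace 𝕜 R] [HasSummableGeomSeries R] {a : R} {z : 𝕜} (ha : ‖a‖ ≤ 1) (hz : ‖z‖ < 1) :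
    IsUnit (1 - z • a) :=
  isUnit_one_sub_of_norm_lt_one <|
    (norm_smul_le z a).trans_lt (mul_lt_one_of_nonneg_of_lt_one_left (norm_nonneg z) hz ha)

section Symplectic

variable {H : Type*} [NormedAddCommGroup H] [InnerProductSpace ℂ H] [CompleteSpace H]

theorem symplectic_graph_pair_eq (T : H →L[ℂ] H) (lam : ℂ) (k x : H) :
    Complex.I * ⟪k, x⟫_ℂ - Complex.I * ⟪T k, lam • x⟫_ℂ
      = Complex.I * ⟪k, (1 - lam • adjoint T) x⟫_ℂ := by
  simp only [sub_apply, one_apply_eq_self, smul_apply, inner_sub_right, inner_smul_right,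
    adjoint_inner_right]
  ring

theorem forall_symplectic_graph_eq_zero_iff (T : H →L[ℂ] H) (K : Submodule ℂ H) (lam : ℂ)
    (x : H) :
    (∀ b ∈ {p : H × H | ∃ k ∈ K, p = (k, T k)},
        Complex.I * ⟪b.1, x⟫_ℂ - Complex.I * ⟪b.2, lam • x⟫_ℂ = 0)
      ↔ (1 - lam • adjoint T) x ∈ Kᗮ := by
  simp only [Set.mem_ofPred_eq, forall_exists_index, and_imp, Submodule.mem_orthogonal]
  rw [forall_comm]
  simp only [forall_eq_apply_imp_iff]
  refine forall₂_congr fun k _ => ?_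
  rw [symplectic_graph_pair_eq, mul_eq_zero, or_iff_right Complex.I_ne_zero]

end Symplectic

theorem weyl_fiber_in_disc_general
    {H : Type*} [NormedAddCommGroup H] [InnerProductSpace ℂ H] [CompleteSpace H]
    (T : H →L[ℂ] H) (hT : ‖T‖ ≤ 1)
    (K : Submodule ℂ H)
    (ATs : Set (H × H))
    (hATs : ATs = {a : H × H | ∀ b ∈ {p : H × H | ∃ x ∈ K, p = (x, T x)},
      Complex.I * ⟪b.1, a.1⟫_ℂ - Complex.I * ⟪b.2, a.2⟫_ℂ = 0})
    (lam : ℂ) (hlam : ‖lam‖ < 1) :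
    {p : H × H | ∃ x : H, p = (x, lam • x)} ∩ ATs
      = {p : H × H | ∃ f ∈ Kᗮ,
          p = (Ring.inverse (1 - lam • adjoint T) f,
                lam • Ring.inverse (1 - lam • adjoint T) f)} := by
  subst hATs
  have hA : IsUnit (1 - lam • adjoint T) :=
    isUnit_one_sub_smul_of_norm_le_one (by rwa [LinearIsometryEquiv.norm_map]) hlam
  ext p
  constructor
  · rintro ⟨⟨x, rfl⟩, hx⟩
    refine ⟨_, (forall_symplectic_graph_eq_zero_iff T K lam x).1 hx, ?_⟩
    rw [← mul_apply_eq_comp, Ring.inverse_mul_cancel _ hA, one_apply_eq_self]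
  · rintro ⟨f, hf, rfl⟩
    refine ⟨⟨_, rfl⟩, (forall_symplectic_graph_eq_zero_iff T K lam _).2 ?_⟩
    rwa [← mul_apply_eq_comp, Ring.mul_inverse_cancel _ hA, one_apply_eq_self]

/-- Let `T` be a contraction on `H`, `K = ker(Id − T*T)`,
`A_T = {(x,Tx) : x ∈ K}`, and `W_λ = {(x, λx)}`. For `|λ| < 1` (so that
`Id − λT*` is boundedly invertible, its inverse being `Ring.inverse`),
`W_λ ∩ A_T^⊥s = {((Id − λT*)⁻¹f, λ(Id − λT*)⁻¹f) : f ∈ K^⊥}`, where `A_T^⊥s`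
is the symplectic orthogonal of `A_T` with respect to the standard symplectic
form (inner products linear in the first variable). -/
theorem weyl_fiber_in_disc
    {H : Type*} [NormedAddCommGroup H] [InnerProductSpace ℂ H] [CompleteSpace H]
    (T : H →L[ℂ] H) (hT : ‖T‖ ≤ 1)
    (K Ks : Submodule ℂ H)
    (hK : K = LinearMap.ker (((1 - adjoint T ∘L T : H →L[ℂ] H) : H →ₗ[ℂ] H)))
    (hKs : Ks = LinearMap.ker (((1 - T ∘L adjoint T : H →L[ℂ] H) : H →ₗ[ℂ] H)))
    (ATs : Set (H × H))
    (hATs : ATs = {a : H × H | ∀ b ∈ {p : H × H | ∃ x ∈ K, p = (x, T x)},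
      Complex.I * ⟪b.1, a.1⟫_ℂ - Complex.I * ⟪b.2, a.2⟫_ℂ = 0})
    (lam : ℂ) (hlam : ‖lam‖ < 1) :
    {p : H × H | ∃ x : H, p = (x, lam • x)} ∩ ATs
      = {p : H × H | ∃ f ∈ Kᗮ,
          p = (Ring.inverse (1 - lam • adjoint T) f,
                lam • Ring.inverse (1 - lam • adjoint T) f)} :=
  weyl_fiber_in_disc_general T hT K ATs hATs lam hlam
end

section
/- Let T be a contraction on H and for λ ∈ ℂ set W_λ := {(x, λx) : x ∈ H} ⊆ H × H. Then for every λ with |λ| > 1 (so that λ − T is boundedly invertible), W_λ ∩ A_T^⊥s = {((λ − T)⁻¹f, λ(λ − T)⁻¹f) : f ∈ K⋆^⊥}. -/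
/-!
On `K = ker (1 - T†T)` the adjoint inverts `T`, so `T` maps `K` onto `K⋆ = ker (1 - TT†)`
(with inverse `T†`). A point `(x, w)` is symplectically orthogonal to the graph of `T` over `K`
iff `⟪y, x⟫ = ⟪T y, w⟫` for all `y ∈ K`; since `⟪y, x⟫ = ⟪T†T y, x⟫ = ⟪T y, T x⟫` there, this
says `w - T x ⊥ T K = K⋆`. For `w = λ x` it reads `(λ - T) x ∈ K⋆ᗮ`, and `λ - T` is invertible
because `‖T‖ ≤ 1 < |λ|`.
-/

open scoped InnerProductSpace
open ContinuousLinearMap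

namespace ContinuousLinearMap

section RingInverse

variable {R M : Type*} [Ring R] [TopologicalSpace M] [AddCommGroup M] [Module R M]
  {A : M →L[R] M}

theorem ringInverse_apply_apply (hA : IsUnit A) (x : M) : Ring.inverse A (A x) = x := by
  rw [← mul_apply_eq_comp, Ring.inverse_mul_cancel A hA, one_apply_eq_self]

theorem apply_ringInverse_apply (hA : IsUnit A) (x : M) : A (Ring.inverse A x) = x := by
  rw [← mul_apply_eq_comp, Ring.mul_inverse_cancel A hA, one_apply_eq_self]

end RingInverse

theorem isUnit_smul_one_sub_of_norm_lt {𝕜 E : Type*} [NontriviallyNormedField 𝕜]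
    [NormedAddCommGroup E] [NormedSpace 𝕜 E] [CompleteSpace E] {T : E →L[𝕜] E} {lam : 𝕜}
    (h : ‖T‖ < ‖lam‖) : IsUnit (lam • (1 : E →L[𝕜] E) - T) := by
  have hlt : ‖T‖ * ‖(1 : E →L[𝕜] E)‖ < ‖lam‖ :=
    (mul_le_of_le_one_right (norm_nonneg T) norm_id_le).trans_lt h
  rw [← Algebra.algebraMap_eq_smul_one]
  exact spectrum.mem_resolventSet_of_norm_lt_mul hlt

variable {H : Type*} [NormedAddCommGroup H] [InnerProductSpace ℂ H] [CompleteSpace H]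
  {T : H →L[ℂ] H}

theorem adjoint_apply_apply_of_mem_ker {y : H}
    (hy : y ∈ LinearMap.ker ((1 - adjoint T ∘L T : H →L[ℂ] H) : H →ₗ[ℂ] H)) :
    adjoint T (T y) = y :=
  (sub_eq_zero.1 hy).symm

theorem apply_mem_ker_one_sub_comp_adjoint {y : H}
    (hy : y ∈ LinearMap.ker ((1 - adjoint T ∘L T : H →L[ℂ] H) : H →ₗ[ℂ] H)) :
    T y ∈ LinearMap.ker ((1 - T ∘L adjoint T : H →L[ℂ] H) : H →ₗ[ℂ] H) := by
  show T y - T (adjoint T (T y)) = 0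
  rw [adjoint_apply_apply_of_mem_ker hy, sub_self]

theorem map_ker_one_sub_adjoint_comp_self :
    (LinearMap.ker ((1 - adjoint T ∘L T : H →L[ℂ] H) : H →ₗ[ℂ] H)).map (T : H →ₗ[ℂ] H)
      = LinearMap.ker ((1 - T ∘L adjoint T : H →L[ℂ] H) : H →ₗ[ℂ] H) := by
  apply le_antisymm
  · rw [Submodule.map_le_iff_le_comap]
    exact fun y hy ↦ apply_mem_ker_one_sub_comp_adjoint hy
  · intro z hz
    -- `ker (1 - TT†) = ker (1 - T††T†)`, so the two lemmas above apply to `T†`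
    have hz' : z ∈ LinearMap.ker
        ((1 - adjoint (adjoint T) ∘L adjoint T : H →L[ℂ] H) : H →ₗ[ℂ] H) := by
      rwa [adjoint_adjoint]
    have hmem := apply_mem_ker_one_sub_comp_adjoint hz'
    have hinv := adjoint_apply_apply_of_mem_ker hz'
    rw [adjoint_adjoint] at hmem hinv
    exact ⟨adjoint T z, hmem, hinv⟩

theorem sub_apply_mem_orthogonal_ker_iff (x w : H) :
    w - T x ∈ (LinearMap.ker ((1 - T ∘L adjoint T : H →L[ℂ] H) : H →ₗ[ℂ] H))ᗮ ↔
      ∀ y ∈ LinearMap.ker ((1 - adjoint T ∘L T : H →L[ℂ] H) : H →ₗ[ℂ] H),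
        ⟪y, x⟫_ℂ = ⟪T y, w⟫_ℂ := by
  simp only [← map_ker_one_sub_adjoint_comp_self, Submodule.mem_orthogonal, Submodule.mem_map,
    forall_exists_index, and_imp, forall_apply_eq_imp_iff₂]
  refine forall₂_congr fun y hy ↦ ?_
  rw [coe_coe, inner_sub_right, ← adjoint_inner_left, adjoint_apply_apply_of_mem_ker hy,
    sub_eq_zero, eq_comm]

end ContinuousLinearMap

theorem symplecticOrthogonal_graph_eq {E F : Type*} [NormedAddCommGroup E]
    [InnerProductSpace ℂ E] [NormedAddCommGroup F] [InnerProductSpace ℂ F] (S : Submodule ℂ E)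
    (T : E → F) :
    {a : E × F | ∀ b ∈ {p : E × F | ∃ x ∈ S, p = (x, T x)},
        Complex.I * ⟪b.1, a.1⟫_ℂ - Complex.I * ⟪b.2, a.2⟫_ℂ = 0} =
      {a : E × F | ∀ y ∈ S, ⟪y, a.1⟫_ℂ = ⟪T y, a.2⟫_ℂ} := by
  ext a
  simp only [Set.mem_ofPred_eq, ← mul_sub, mul_eq_zero, Complex.I_ne_zero, false_or, sub_eq_zero]
  exact ⟨fun h y hy ↦ h _ ⟨y, hy, rfl⟩, by rintro h _ ⟨y, hy, rfl⟩; exact h y hy⟩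

/-- Let `T` be a contraction on `H`, `K = ker(Id − T*T)`,
`K⋆ = ker(Id − TT*)`, `A_T = {(x,Tx) : x ∈ K}`, and `W_λ = {(x, λx)}`. For
`|λ| > 1` (so that `λ − T` is boundedly invertible, its inverse being
`Ring.inverse`), `W_λ ∩ A_T^⊥s = {((λ − T)⁻¹f, λ(λ − T)⁻¹f) : f ∈ K⋆^⊥}`,
where `A_T^⊥s` is the symplectic orthogonal of `A_T` with respect to the
standard symplectic form (inner products linear in the first variable). -/
theorem weyl_fiber_outside_disc
    {H : Type*} [NormedAddCommGroup H] [InnerProductSpace ℂ H] [CompleteSpace H]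
    (T : H →L[ℂ] H) (hT : ‖T‖ ≤ 1)
    (K Ks : Submodule ℂ H)
    (hK : K = LinearMap.ker ((1 - adjoint T ∘L T : H →L[ℂ] H) : H →ₗ[ℂ] H))
    (hKs : Ks = LinearMap.ker ((1 - T ∘L adjoint T : H →L[ℂ] H) : H →ₗ[ℂ] H))
    (ATs : Set (H × H))
    (hATs : ATs = {a : H × H | ∀ b ∈ {p : H × H | ∃ x ∈ K, p = (x, T x)},
      Complex.I * ⟪b.1, a.1⟫_ℂ - Complex.I * ⟪b.2, a.2⟫_ℂ = 0})
    (lam : ℂ) (hlam : 1 < ‖lam‖) :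
    {p : H × H | ∃ x : H, p = (x, lam • x)} ∩ ATs
      = {p : H × H | ∃ f ∈ Ksᗮ,
          p = (Ring.inverse (lam • (1 : H →L[ℂ] H) - T) f,
                lam • Ring.inverse (lam • (1 : H →L[ℂ] H) - T) f)} := by
  have hA : IsUnit (lam • (1 : H →L[ℂ] H) - T) :=
    isUnit_smul_one_sub_of_norm_lt (hT.trans_lt hlam)
  have hA_apply (x : H) : (lam • (1 : H →L[ℂ] H) - T) x = lam • x - T x := rfl
  subst hK hKs hATs
  rw [symplecticOrthogonal_graph_eq]
  ext p
  simp only [Set.mem_inter_iff, Set.mem_ofPred_eq]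
  constructor
  · rintro ⟨⟨x, rfl⟩, hx⟩
    refine ⟨lam • x - T x, (sub_apply_mem_orthogonal_ker_iff x _).2 hx, ?_⟩
    rw [← hA_apply, ringInverse_apply_apply hA]
  · rintro ⟨f, hf, rfl⟩
    refine ⟨⟨_, rfl⟩, (sub_apply_mem_orthogonal_ker_iff _ _).1 ?_⟩
    rwa [← hA_apply, apply_ringInverse_apply hA]
end

section
/- Let T be a completely non-unitary contraction on H. For λ ∈ ℂ with |λ| ≠ 1 set N_λ := W_λ ∩ A_T^⊥s, where W_λ := {(x, λx) : x ∈ H}. Then the closed linear span of the union of all N_λ over λ with |λ| < 1 and λ with |λ| > 1 equals A_T^⊥s. -/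
/-!
The closed span of the fibres lies in the closed subspace `A_T^⊥s`, so it suffices that a vector
`(a, b) ∈ A_T^⊥s` orthogonal in `L²(H × H)` to every fibre vanishes. Orthogonality to `N_{conj μ}`
says that `a + μ b` lies in the closure of `(1 - μ T) K`, and this subspace is closed because `T`
is isometric on `K` and `|μ| ≠ 1`. Peeling off, one at a time, the Taylor coefficients of the
solutions `k ∈ K` of `(1 - μ T) k = a + μ b` at `μ = 0` and at `μ = ∞` shows that `a = T* b`,
`b = T a`, and that `2 a` has a two-sided `T`-orbit inside `K`. The closed span of that orbit is a
subspace on which `T` is unitary, hence `0`.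
-/

open scoped InnerProductSpace
open ContinuousLinearMap Filter Topology

theorem Submodule.isClosed_map_of_mul_norm_le {𝕜 E F : Type*} [NontriviallyNormedField 𝕜]
    [NormedAddCommGroup E] [NormedSpace 𝕜 E] [CompleteSpace E]
    [NormedAddCommGroup F] [NormedSpace 𝕜 F] {K : Submodule 𝕜 E} (hK : IsClosed (K : Set E))
    (f : E →L[𝕜] F) {c : ℝ} (hc : 0 < c) (hf : ∀ x ∈ K, c * ‖x‖ ≤ ‖f x‖) :
    IsClosed (K.map (f : E →ₗ[𝕜] F) : Set F) := by
  have : CompleteSpace K := hK.completeSpace_coe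
  have hanti : AntilipschitzWith (Real.toNNReal c⁻¹) (f ∘L K.subtypeL) :=
    ContinuousLinearMap.antilipschitz_of_bound _ fun x => by
      rw [Real.coe_toNNReal _ (inv_nonneg.2 hc.le), le_inv_mul_iff₀ hc]
      exact hf x x.2
  have := hanti.isClosed_range (f ∘L K.subtypeL).uniformContinuous
  rwa [coe_comp, Set.range_comp, Submodule.coe_subtypeL, Submodule.coe_subtype,
    Subtype.range_coe] at this

theorem abs_one_sub_norm_mul_le_norm_sub_smul {E : Type*} [NormedAddCommGroup E]
    [NormedSpace ℂ E] {x y z : E} (hy : ‖y‖ = ‖x‖) (hz : ‖z‖ = ‖x‖) (μ : ℂ) :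
    |1 - ‖μ‖| * ‖x‖ ≤ ‖y - μ • z‖ := by
  calc |1 - ‖μ‖| * ‖x‖ = |‖y‖ - ‖μ • z‖| := by
        rw [norm_smul, hy, hz, ← abs_of_nonneg (norm_nonneg x), ← abs_mul, abs_norm]; ring_nf
    _ ≤ ‖y - μ • z‖ := abs_norm_sub_norm_le _ _

theorem closure_span_eq_of_forall_inner_eq_zero {𝕜 E F : Type*} [RCLike 𝕜]
    [NormedAddCommGroup E] [InnerProductSpace 𝕜 E] [CompleteSpace E]
    [NormedAddCommGroup F] [InnerProductSpace 𝕜 F] [CompleteSpace F]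
    {S : Set (E × F)} {N : Submodule 𝕜 (E × F)} (hN : IsClosed (N : Set (E × F))) (hSN : S ⊆ N)
    (h : ∀ w ∈ N, (∀ s ∈ S, ⟪s.1, w.1⟫_𝕜 + ⟪s.2, w.2⟫_𝕜 = 0) → w = 0) :
    closure (Submodule.span 𝕜 S : Set (E × F)) = N := by
  set M := (Submodule.span 𝕜 S).topologicalClosure
  have hMN : M ≤ N := Submodule.topologicalClosure_minimal _ (Submodule.span_le.2 hSN) hN
  rw [← Submodule.topologicalClosure_coe]
  refine congrArg SetLike.coe (le_antisymm hMN fun n hn => ?_)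
  -- `E × F` carries the sup norm; the orthogonal decomposition takes place in the `L²` product.
  let e := WithLp.prodContinuousLinearEquiv 2 𝕜 E F
  set M' := M.comap (e : WithLp 2 (E × F) →ₗ[𝕜] E × F)
  have : CompleteSpace M' :=
    ((Submodule.isClosed_topologicalClosure _).preimage e.continuous).completeSpace_coe
  obtain ⟨y, hy, z, hz, hyz⟩ := M'.exists_add_mem_mem_orthogonal (WithLp.toLp 2 n)
  have hez : e z = n - e y := by
    rw [eq_sub_iff_add_eq, add_comm, ← map_add, ← hyz]; rfl
  have hz0 : e z = 0 := by
    refine h (e z) (hez ▸ N.sub_mem hn (hMN hy)) fun s hs => ?_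
    exact (Submodule.mem_orthogonal _ _).1 hz (WithLp.toLp 2 s)
      (Submodule.le_topologicalClosure _ (Submodule.subset_span hs))
  have : n = e y := by rw [← sub_eq_zero, ← hez, hz0]
  exact this ▸ hy

section Pencil

variable {E : Type*} [NormedAddCommGroup E] [NormedSpace ℂ E] [CompleteSpace E]
  {K : Submodule ℂ E} {A B : E →L[ℂ] E}

/-- With `A = 1`, `B = T` this is solvability of `(1 - μ • T) k = v + μ • u` in `K` near `μ = 0`;
with `A = T`, `B = 1` it is the same equation near `μ = ∞`, rescaled by `μ⁻¹`. -/
def SolvableNearZero (A B : E →L[ℂ] E) (K : Submodule ℂ E) (v u : E) : Prop :=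
  ∀ μ : ℂ, 0 < ‖μ‖ → ‖μ‖ < 1 → v + μ • u ∈ K.map ((A - μ • B : E →L[ℂ] E) : E →ₗ[ℂ] E)

variable (hK : IsClosed (K : Set E)) (hA : ∀ x ∈ K, ‖A x‖ = ‖x‖) (hB : ∀ x ∈ K, ‖B x‖ = ‖x‖)
include hK hA hB

/-- The solutions `k_μ` satisfy `A k_μ → v` as `μ → 0`, and `A '' K` is closed. -/
theorem SolvableNearZero.mem_map {v u : E} (h : SolvableNearZero A B K v u) :
    v ∈ K.map (A : E →ₗ[ℂ] E) := by
  set μ : ℕ → ℂ := fun n => ((n : ℂ) + 2)⁻¹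
  have hμ : ∀ n, ‖μ n‖ = ((n : ℝ) + 2)⁻¹ := fun n => by
    rw [norm_inv, ← Nat.cast_ofNat, ← Nat.cast_add, Complex.norm_natCast]; push_cast; rfl
  have hμ_pos : ∀ n, 0 < ‖μ n‖ := fun n => by rw [hμ]; positivity
  have hμ_le : ∀ n, ‖μ n‖ ≤ 1 / 2 := fun n => by
    rw [hμ, one_div]; exact inv_anti₀ two_pos (by linarith [n.cast_nonneg (α := ℝ)])
  choose k hkK hk using fun n => h (μ n) (hμ_pos n) (by linarith [hμ_le n])
  have hk_le : ∀ n, ‖k n‖ ≤ 2 * (‖v‖ + ‖u‖) := fun n => by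
    have hlow := abs_one_sub_norm_mul_le_norm_sub_smul (hA _ (hkK n)) (hB _ (hkK n)) (μ n)
    have hkn : A (k n) - μ n • B (k n) = v + μ n • u := hk n
    have hup : ‖v + μ n • u‖ ≤ ‖v‖ + ‖u‖ := by
      grw [norm_add_le, norm_smul, hμ_le n]; linarith [norm_nonneg u]
    rw [abs_of_pos (by linarith [hμ_le n]), hkn] at hlow
    nlinarith [mul_le_mul_of_nonneg_right (hμ_le n) (norm_nonneg (k n))]
  have hAk : ∀ n, ‖A (k n) - v‖ ≤ ‖μ n‖ * (3 * (‖v‖ + ‖u‖)) := fun n => by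
    have hkn : A (k n) - μ n • B (k n) = v + μ n • u := hk n
    rw [show A (k n) - v = μ n • (u + B (k n)) by linear_combination (norm := module) hkn,
      norm_smul]
    gcongr
    grw [norm_add_le, hB _ (hkK n), hk_le n]; linarith [norm_nonneg u, norm_nonneg v]
  have hlim : Tendsto (fun n => A (k n)) atTop (𝓝 v) := by
    rw [tendsto_iff_norm_sub_tendsto_zero]
    refine squeeze_zero (fun n => norm_nonneg _) hAk ?_
    simp_rw [hμ]
    have : Tendsto (fun n : ℕ => ((n : ℝ) + 2)⁻¹) atTop (𝓝 0) :=
      tendsto_inv_atTop_zero.comp (tendsto_natCast_atTop_atTop.atTop_add tendsto_const_nhds)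
    simpa using this.mul_const (3 * (‖v‖ + ‖u‖))
  exact (Submodule.isClosed_map_of_mul_norm_le hK A one_pos fun x hx => by rw [one_mul, hA x hx])
    |>.mem_of_tendsto hlim (Eventually.of_forall fun n => Submodule.mem_map_of_mem (hkK n))

/-- Peeling off the constant term `k₀` of the solutions `k_μ`: `(k_μ - k₀) / μ` solves the
shifted equation. -/
theorem SolvableNearZero.exists_apply_eq {v u : E} (h : SolvableNearZero A B K v u) :
    ∃ k₀ ∈ K, A k₀ = v ∧ SolvableNearZero A B K (u + B k₀) 0 := by
  obtain ⟨k₀, hk₀, rfl⟩ := h.mem_map hK hA hB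
  refine ⟨k₀, hk₀, rfl, fun μ h0 h1 => ?_⟩
  obtain ⟨k, hk, hkeq⟩ := h μ h0 h1
  refine ⟨μ⁻¹ • (k - k₀), K.smul_mem _ (K.sub_mem hk hk₀), ?_⟩
  have hμ0 : μ ≠ 0 := norm_pos_iff.1 h0
  have hkeq' : A k - μ • B k = A k₀ + μ • u := hkeq
  simp only [coe_coe, sub_apply, smul_apply, map_smul, map_sub, smul_zero, add_zero]
  linear_combination (norm := skip) μ⁻¹ • hkeq'
  match_scalars <;> simp [hμ0]

theorem SolvableNearZero.exists_seq {w : E} (h : SolvableNearZero A B K w 0) :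
    ∃ z : ℕ → E, (∀ n, z n ∈ K) ∧ A (z 0) = w ∧ ∀ n, A (z (n + 1)) = B (z n) := by
  have step : ∀ w, SolvableNearZero A B K w 0 →
      ∃ k ∈ K, A k = w ∧ SolvableNearZero A B K (B k) 0 := fun w hw => by
    simpa only [zero_add] using hw.exists_apply_eq hK hA hB
  choose! f hfK hfA hfS using step
  have hsolv : ∀ n, SolvableNearZero A B K ((B ∘ f)^[n] w) 0 := by
    intro n
    induction n with
    | zero => exact h
    | succ n ih => rw [Function.iterate_succ_apply']; exact hfS _ ih
  refine ⟨fun n => f ((B ∘ f)^[n] w), fun n => hfK _ (hsolv n), hfA _ h, fun n => ?_⟩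
  simp only [Function.iterate_succ_apply', Function.comp_apply]
  exact hfA _ (hfS _ (hsolv n))

end Pencil

section CompletelyNonUnitary

variable {E : Type*} [NormedAddCommGroup E] [NormedSpace ℂ E] [CompleteSpace E]

def IsCompletelyNonUnitary (T : E →L[ℂ] E) : Prop :=
  ∀ 𝒦 : Submodule ℂ E, IsClosed (𝒦 : Set E) →
    (∀ v ∈ 𝒦, T v ∈ 𝒦) → (∀ v ∈ 𝒦, ‖T v‖ = ‖v‖) →
    T '' (𝒦 : Set E) = (𝒦 : Set E) → 𝒦 = ⊥

theorem IsCompletelyNonUnitary.subset_zero {T : E →L[ℂ] E} (hT : IsCompletelyNonUnitary T)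
    {K : Submodule ℂ E} (hK : IsClosed (K : Set E)) (hiso : ∀ v ∈ K, ‖T v‖ = ‖v‖)
    {G : Set E} (hGK : G ⊆ K) (hTG : T '' G = G) : G ⊆ {0} := by
  set 𝒦 := (Submodule.span ℂ G).topologicalClosure
  have h𝒦K : 𝒦 ≤ K := Submodule.topologicalClosure_minimal _ (Submodule.span_le.2 hGK) hK
  have hspan : (Submodule.span ℂ G).map (T : E →ₗ[ℂ] E) = Submodule.span ℂ G := by
    rw [Submodule.map_span, coe_coe, hTG]
  have hmap : 𝒦.map (T : E →ₗ[ℂ] E) = 𝒦 := by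
    refine le_antisymm ?_ ?_
    · exact (Submodule.topologicalClosure_map T _).trans (by rw [hspan])
    · refine Submodule.topologicalClosure_minimal _ ?_
        (Submodule.isClosed_map_of_mul_norm_le (Submodule.isClosed_topologicalClosure _) T
          one_pos fun v hv => by rw [one_mul, hiso v (h𝒦K hv)])
      rw [← hspan]
      exact Submodule.map_mono (Submodule.le_topologicalClosure _)
  have hbot : 𝒦 = ⊥ := hT 𝒦 (Submodule.isClosed_topologicalClosure _)
    (fun v hv => hmap ▸ Submodule.mem_map_of_mem hv) (fun v hv => hiso v (h𝒦K hv))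
    (congrArg SetLike.coe hmap)
  intro g hg
  have : g ∈ 𝒦 := Submodule.le_topologicalClosure _ (Submodule.subset_span hg)
  rwa [hbot, Submodule.mem_bot] at this

theorem IsCompletelyNonUnitary.eq_zero_of_two_sided_orbit {T : E →L[ℂ] E}
    (hT : IsCompletelyNonUnitary T)
    {K : Submodule ℂ E} (hK : IsClosed (K : Set E)) (hiso : ∀ v ∈ K, ‖T v‖ = ‖v‖)
    {c : E} {z y : ℕ → E} (hc : c ∈ K) (hzK : ∀ n, z n ∈ K) (hyK : ∀ n, y n ∈ K)
    (hz0 : T c = z 0) (hz : ∀ n, T (z n) = z (n + 1))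
    (hy0 : T (y 0) = c) (hy : ∀ n, T (y (n + 1)) = y n) : c = 0 := by
  set G := insert c (Set.range z ∪ Set.range y)
  have hG : T '' G = G := by
    ext x
    constructor
    · rintro ⟨x, hx | ⟨n, rfl⟩ | ⟨_ | n, rfl⟩, rfl⟩
      · exact Or.inr (Or.inl ⟨0, by rw [hx, hz0]⟩)
      · exact Or.inr (Or.inl ⟨n + 1, (hz n).symm⟩)
      · exact Or.inl hy0
      · exact Or.inr (Or.inr ⟨n, (hy n).symm⟩)
    · rintro (rfl | ⟨_ | n, rfl⟩ | ⟨n, rfl⟩)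
      · exact ⟨y 0, Or.inr (Or.inr ⟨0, rfl⟩), hy0⟩
      · exact ⟨c, Or.inl rfl, hz0⟩
      · exact ⟨z n, Or.inr (Or.inl ⟨n, rfl⟩), hz n⟩
      · exact ⟨y (n + 1), Or.inr (Or.inr ⟨n + 1, rfl⟩), hy n⟩
  have hGK : G ⊆ K := by
    rintro x (rfl | ⟨n, rfl⟩ | ⟨n, rfl⟩)
    exacts [hc, hzK n, hyK n]
  exact hT.subset_zero hK hiso hGK hG (Set.mem_insert c _)

end CompletelyNonUnitary

noncomputable section Hilbert

variable {H : Type*} [NormedAddCommGroup H] [InnerProductSpace ℂ H] [CompleteSpace H]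

def defectKer (T : H →L[ℂ] H) : Submodule ℂ H :=
  LinearMap.ker ((1 - adjoint T ∘L T : H →L[ℂ] H) : H →ₗ[ℂ] H)

variable (T : H →L[ℂ] H)

theorem mem_defectKer_iff {x : H} : x ∈ defectKer T ↔ adjoint T (T x) = x := by
  rw [defectKer, LinearMap.mem_ker, coe_coe, sub_apply, one_apply_eq_self, comp_apply,
    sub_eq_zero, eq_comm]

theorem isClosed_defectKer : IsClosed (defectKer T : Set H) :=
  ContinuousLinearMap.isClosed_ker _

theorem norm_apply_of_mem_defectKer {x : H} (hx : x ∈ defectKer T) : ‖T x‖ = ‖x‖ := by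
  have h := apply_norm_sq_eq_inner_adjoint_left T x
  rw [comp_apply, (mem_defectKer_iff T).1 hx, inner_self_eq_norm_sq] at h
  exact (sq_eq_sq₀ (norm_nonneg _) (norm_nonneg _)).1 h

theorem isClosed_map_one_sub_smul {μ : ℂ} (hμ : ‖μ‖ ≠ 1) :
    IsClosed ((defectKer T).map ((1 - μ • T : H →L[ℂ] H) : H →ₗ[ℂ] H) : Set H) := by
  refine Submodule.isClosed_map_of_mul_norm_le (isClosed_defectKer T) _
    (abs_pos.2 (sub_ne_zero.2 hμ.symm)) fun x hx => ?_
  simpa using abs_one_sub_norm_mul_le_norm_sub_smul rfl (norm_apply_of_mem_defectKer T hx) μ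

/-- `A_T^⊥s`, the symplectic orthogonal of the graph `{(x, T x) : x ∈ K}` (see
`coe_graphSymplOrth`). -/
def graphSymplOrth (K : Submodule ℂ H) : Submodule ℂ (H × H) :=
  Kᗮ.comap ((fst ℂ H H - adjoint T ∘L snd ℂ H H : H × H →L[ℂ] H) : H × H →ₗ[ℂ] H)

theorem mem_graphSymplOrth_iff {K : Submodule ℂ H} {p : H × H} :
    p ∈ graphSymplOrth T K ↔ p.1 - adjoint T p.2 ∈ Kᗮ := Iff.rfl

theorem isClosed_graphSymplOrth (K : Submodule ℂ H) :
    IsClosed (graphSymplOrth T K : Set (H × H)) :=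
  (Submodule.isClosed_orthogonal K).preimage (fst ℂ H H - adjoint T ∘L snd ℂ H H).continuous

theorem coe_graphSymplOrth (K : Submodule ℂ H) :
    (graphSymplOrth T K : Set (H × H)) =
      {a : H × H | ∀ b ∈ {p : H × H | ∃ x ∈ K, p = (x, T x)},
        Complex.I * ⟪b.1, a.1⟫_ℂ - Complex.I * ⟪b.2, a.2⟫_ℂ = 0} := by
  ext p
  simp only [SetLike.mem_coe, mem_graphSymplOrth_iff, Submodule.mem_orthogonal, inner_sub_right,
    adjoint_inner_right, Set.mem_ofPred_eq, forall_exists_index, and_imp]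
  refine ⟨fun h b x hx hb => ?_, fun h x hx => ?_⟩
  · rw [hb, ← mul_sub, h x hx, mul_zero]
  · simpa [Complex.I_ne_zero, ← mul_sub] using h _ x hx rfl

theorem mk_smul_mem_graphSymplOrth_iff (K : Submodule ℂ H) (μ : ℂ) (x : H) :
    (x, (starRingEnd ℂ) μ • x) ∈ graphSymplOrth T K ↔
      x ∈ (K.map ((1 - μ • T : H →L[ℂ] H) : H →ₗ[ℂ] H))ᗮ := by
  simp only [mem_graphSymplOrth_iff, Submodule.mem_orthogonal, Submodule.mem_map,
    forall_exists_index, and_imp, forall_apply_eq_imp_iff₂, coe_coe, sub_apply,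
    one_apply_eq_self, smul_apply, inner_sub_left, inner_sub_right, inner_smul_left,
    inner_smul_right, map_smul, adjoint_inner_right]

theorem add_smul_mem_map_of_forall_inner_eq_zero {μ : ℂ} (hμ : ‖μ‖ ≠ 1) {a b : H}
    (h : ∀ x, (x, (starRingEnd ℂ) μ • x) ∈ graphSymplOrth T (defectKer T) →
      ⟪x, a⟫_ℂ + ⟪(starRingEnd ℂ) μ • x, b⟫_ℂ = 0) :
    a + μ • b ∈ (defectKer T).map ((1 - μ • T : H →L[ℂ] H) : H →ₗ[ℂ] H) := by
  rw [← SetLike.mem_coe, ← (isClosed_map_one_sub_smul T hμ).closure_eq,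
    ← Submodule.topologicalClosure_coe, ← Submodule.orthogonal_orthogonal_eq_closure]
  intro x hx
  simpa [inner_add_right, inner_smul_left, inner_smul_right, mul_comm] using
    h x ((mk_smul_mem_graphSymplOrth_iff T _ μ x).2 hx)

theorem IsCompletelyNonUnitary.eq_zero_of_forall_mem_map {T : H →L[ℂ] H}
    (hT : IsCompletelyNonUnitary T) {a b : H} (hab : (a, b) ∈ graphSymplOrth T (defectKer T))
    (h : ∀ μ : ℂ, ‖μ‖ ≠ 1 →
      a + μ • b ∈ (defectKer T).map ((1 - μ • T : H →L[ℂ] H) : H →ₗ[ℂ] H)) :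
    a = 0 ∧ b = 0 := by
  set K := defectKer T
  have hK := isClosed_defectKer T
  have hiso : ∀ x ∈ K, ‖T x‖ = ‖x‖ := fun x hx => norm_apply_of_mem_defectKer T hx
  have hone : ∀ x ∈ K, ‖(1 : H →L[ℂ] H) x‖ = ‖x‖ := fun x _ => rfl
  have hnear : SolvableNearZero 1 T K a b := fun μ _ hμ => h μ hμ.ne
  have hfar : SolvableNearZero T 1 K b a := fun ν h0 h1 => by
    -- the solution `k` at `ν⁻¹` gives `(T - ν • 1) (-k) = ν • (a + ν⁻¹ • b)`
    obtain ⟨k, hk, hkeq⟩ := h ν⁻¹ (by rw [norm_inv]; exact ((one_lt_inv₀ h0).2 h1).ne')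
    refine ⟨-k, K.neg_mem hk, ?_⟩
    have hν : ν ≠ 0 := norm_pos_iff.1 h0
    have hkeq' : k - ν⁻¹ • T k = a + ν⁻¹ • b := hkeq
    simp only [coe_coe, sub_apply, smul_apply, one_apply_eq_self, map_neg]
    linear_combination (norm := skip) ν • hkeq'
    match_scalars <;> simp [hν]
  obtain ⟨a', ha, ha', hnear'⟩ := hnear.exists_apply_eq hK hone hiso
  rw [one_apply_eq_self] at ha'
  subst a'
  obtain ⟨l, hl, rfl, hfar'⟩ := hfar.exists_apply_eq hK hiso hone
  have hla : l = a := by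
    have : a - l ∈ K ⊓ Kᗮ :=
      ⟨K.sub_mem ha hl, by simpa [mem_graphSymplOrth_iff, (mem_defectKer_iff T).1 hl] using hab⟩
    rw [K.inf_orthogonal_eq_bot, Submodule.mem_bot, sub_eq_zero] at this
    exact this.symm
  subst l
  obtain ⟨z, hzK, hz0, hz⟩ := hnear'.exists_seq hK hone hiso
  obtain ⟨y, hyK, hy0, hy⟩ := hfar'.exists_seq hK hiso hone
  have haa : a + a = 0 := hT.eq_zero_of_two_sided_orbit hK hiso (K.add_mem ha ha) hzK hyK
    (by simpa [map_add] using hz0.symm) (fun n => by simpa using (hz n).symm)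
    (by simpa using hy0) (by simpa using hy)
  have ha0 : a = 0 := by rwa [← two_smul ℂ, smul_eq_zero, or_iff_right two_ne_zero] at haa
  exact ⟨ha0, by rw [ha0, map_zero]⟩

end Hilbert

theorem weyl_fibers_span_dense_general
    {H : Type*} [NormedAddCommGroup H] [InnerProductSpace ℂ H] [CompleteSpace H]
    (T : H →L[ℂ] H)
    (hcnu : ∀ 𝒦 : Submodule ℂ H, IsClosed (𝒦 : Set H) →
      (∀ v ∈ 𝒦, T v ∈ 𝒦) → (∀ v ∈ 𝒦, ‖T v‖ = ‖v‖) →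
      T '' (𝒦 : Set H) = (𝒦 : Set H) → 𝒦 = ⊥)
    (K : Submodule ℂ H)
    (hK : K = LinearMap.ker ((1 - adjoint T ∘L T : H →L[ℂ] H) : H →ₗ[ℂ] H))
    (ATs : Set (H × H))
    (hATs : ATs = {a : H × H | ∀ b ∈ {p : H × H | ∃ x ∈ K, p = (x, T x)},
      Complex.I * ⟪b.1, a.1⟫_ℂ - Complex.I * ⟪b.2, a.2⟫_ℂ = 0})
    (N : ℂ → Set (H × H))
    (hN : ∀ lam : ℂ, N lam = {p : H × H | ∃ x : H, p = (x, lam • x)} ∩ ATs) :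
    closure (Submodule.span ℂ
        (⋃ lam ∈ {l : ℂ | ‖l‖ < 1 ∨ 1 < ‖l‖}, N lam)
      : Set (H × H)) = ATs := by
  rw [← coe_graphSymplOrth] at hATs
  subst hATs hK
  refine closure_span_eq_of_forall_inner_eq_zero (isClosed_graphSymplOrth T _)
    (Set.iUnion₂_subset fun lam _ => hN lam ▸ Set.inter_subset_right) fun w hw hperp => ?_
  have hmem : ∀ μ : ℂ, ‖μ‖ ≠ 1 →
      w.1 + μ • w.2 ∈ (defectKer T).map ((1 - μ • T : H →L[ℂ] H) : H →ₗ[ℂ] H) :=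
    fun μ hμ => add_smul_mem_map_of_forall_inner_eq_zero T hμ fun x hx =>
      hperp _ (Set.mem_biUnion (x := (starRingEnd ℂ) μ) (by simpa using hμ.lt_or_gt)
        (by rw [hN]; exact ⟨⟨x, rfl⟩, hx⟩))
  obtain ⟨ha, hb⟩ := IsCompletelyNonUnitary.eq_zero_of_forall_mem_map hcnu hw hmem
  exact Prod.ext ha hb

/-- Let `T` be a completely non-unitary contraction on `H`,
`K = ker(Id − T*T)`, `A_T = {(x,Tx) : x ∈ K}`, and for `λ ∈ ℂ` let
`N_λ = W_λ ∩ A_T^⊥s` where `W_λ = {(x, λx)}` and `A_T^⊥s` is the symplectic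
orthogonal of `A_T` (standard symplectic form, inner products linear in the
first variable). Then the closed linear span of `⋃_{|λ| < 1 or |λ| > 1} N_λ`
equals `A_T^⊥s`. -/
theorem weyl_fibers_span_dense
    {H : Type*} [NormedAddCommGroup H] [InnerProductSpace ℂ H] [CompleteSpace H]
    (T : H →L[ℂ] H) (hT : ‖T‖ ≤ 1)
    (hcnu : ∀ 𝒦 : Submodule ℂ H, IsClosed (𝒦 : Set H) →
      (∀ v ∈ 𝒦, T v ∈ 𝒦) → (∀ v ∈ 𝒦, ‖T v‖ = ‖v‖) →
      T '' (𝒦 : Set H) = (𝒦 : Set H) → 𝒦 = ⊥)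
    (K Ks : Submodule ℂ H)
    (hK : K = LinearMap.ker ((1 - adjoint T ∘L T : H →L[ℂ] H) : H →ₗ[ℂ] H))
    (hKs : Ks = LinearMap.ker ((1 - T ∘L adjoint T : H →L[ℂ] H) : H →ₗ[ℂ] H))
    (ATs : Set (H × H))
    (hATs : ATs = {a : H × H | ∀ b ∈ {p : H × H | ∃ x ∈ K, p = (x, T x)},
      Complex.I * ⟪b.1, a.1⟫_ℂ - Complex.I * ⟪b.2, a.2⟫_ℂ = 0})
    (N : ℂ → Set (H × H))
    (hN : ∀ lam : ℂ, N lam = {p : H × H | ∃ x : H, p = (x, lam • x)} ∩ ATs) :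
    closure (Submodule.span ℂ
        (⋃ lam ∈ {l : ℂ | ‖l‖ < 1 ∨ 1 < ‖l‖}, N lam)
      : Set (H × H)) = ATs :=
  weyl_fibers_span_dense_general T hcnu K hK ATs hATs N hN
end

section
/- Let T be a contraction on H and for |λ| < 1 define the characteristic function Θ_T(λ)u := −Tu + λ𝔇⋆(Id − λT*)⁻¹𝔇u for u ∈ K^⊥. Then for every λ with |λ| < 1, Θ_T(λ) maps K^⊥ into K⋆^⊥ and is a pure contraction: ‖Θ_T(λ)u‖ < ‖u‖ for every nonzero u ∈ K^⊥. -/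
/-!
Write `𝔇 = √(1 - T*T)`, `𝔇⋆ = √(1 - TT*)` and `v = (1 - λT*)⁻¹ 𝔇u`. Since `T` intertwines
`1 - T*T` and `1 - TT*`, and the square root is a uniform limit of polynomials on the spectra,
`T𝔇 = 𝔇⋆T`. Expanding `‖-Tu + λ𝔇⋆v‖²` with this relation, `𝔇² = 1 - T*T`, `𝔇⋆² = 1 - TT*` and
`𝔇u = v - λT*v` collapses everything to `‖u‖² - (1 - |λ|²)‖v‖²`. As `K = ker 𝔇`, a nonzero
`u ∈ K^⊥` has `𝔇u ≠ 0`, hence `v ≠ 0` and the inequality is strict. Orthogonality to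
`K⋆ = ker 𝔇⋆` holds because `T*` maps `K⋆` into `K` and `𝔇⋆` is self-adjoint.
-/

open ContinuousLinearMap Polynomial Filter Topology
open scoped InnerProductSpace ComplexConjugate

theorem semiconjBy_one_sub_star_mul_self {R : Type*} [Ring R] [Star R] (x : R) :
    SemiconjBy x (1 - star x * x) (1 - x * star x) := by
  simp only [SemiconjBy, mul_sub, sub_mul, mul_one, one_mul, mul_assoc]

section CStarAlgebra

variable {A : Type*} [CStarAlgebra A]

theorem norm_cfc_sub_aeval_le {a : A} (ha : IsSelfAdjoint a) {f : ℝ → ℝ} {p : ℝ[X]} {s : Set ℝ}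
    (hf : ContinuousOn f (spectrum ℝ a)) (hs : spectrum ℝ a ⊆ s) {δ : ℝ} (hδ : 0 ≤ δ)
    (hp : ∀ t ∈ s, |f t - p.eval t| ≤ δ) :
    ‖cfc f a - aeval a p‖ ≤ δ := by
  rw [← cfc_polynomial p a, ← cfc_sub f (fun t => p.eval t) a]
  exact norm_cfc_le hδ fun t ht => hp t (hs ht)

theorem SemiconjBy.aeval {x a b : A} (h : SemiconjBy x a b) (p : ℝ[X]) :
    SemiconjBy x (Polynomial.aeval a p) (Polynomial.aeval b p) := by
  induction p using Polynomial.induction_on' with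
  | add p q hp hq => simpa only [map_add] using hp.add_right hq
  | monomial n c =>
    simpa only [aeval_monomial, ← Algebra.smul_def] using (h.pow_right n).smul_right c

theorem SemiconjBy.cfc_real {x a b : A} (h : SemiconjBy x a b) (ha : IsSelfAdjoint a)
    (hb : IsSelfAdjoint b) {f : ℝ → ℝ} (hf : Continuous f) :
    SemiconjBy x (cfc f a) (cfc f b) := by
  cases subsingleton_or_nontrivial A
  · exact Subsingleton.elim _ _
  set M := max ‖a‖ ‖b‖
  have hspec : ∀ c : A, ‖c‖ ≤ M → spectrum ℝ c ⊆ Set.Icc (-M) M := fun c hc t ht =>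
    abs_le.mp (((Real.norm_eq_abs t).symm ▸ spectrum.norm_le_norm_of_mem ht).trans hc)
  -- Weierstrass approximation of `f` on an interval containing both spectra
  have hbound : ∀ δ > 0, ‖x * cfc f a - cfc f b * x‖ ≤ 2 * ‖x‖ * δ := by
    intro δ hδ
    obtain ⟨p, hp⟩ := exists_polynomial_near_of_continuousOn (-M) M f hf.continuousOn δ hδ
    have hp' : ∀ t ∈ Set.Icc (-M) M, |f t - p.eval t| ≤ δ := fun t ht => by
      rw [abs_sub_comm]; exact (hp t ht).le
    have hfa := norm_cfc_sub_aeval_le ha hf.continuousOn (hspec a (le_max_left _ _)) hδ.le hp'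
    have hfb := norm_cfc_sub_aeval_le hb hf.continuousOn (hspec b (le_max_right _ _)) hδ.le hp'
    calc ‖x * cfc f a - cfc f b * x‖
        = ‖x * (cfc f a - Polynomial.aeval a p) - (cfc f b - Polynomial.aeval b p) * x‖ := by
          rw [mul_sub, sub_mul, (h.aeval p).eq]; congr 1; abel
      _ ≤ ‖x‖ * ‖cfc f a - Polynomial.aeval a p‖ + ‖cfc f b - Polynomial.aeval b p‖ * ‖x‖ :=
          (norm_sub_le _ _).trans (add_le_add (norm_mul_le _ _) (norm_mul_le _ _))
      _ ≤ ‖x‖ * δ + δ * ‖x‖ := by gcongr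
      _ = 2 * ‖x‖ * δ := by ring
  have hlim : Tendsto (fun δ : ℝ => 2 * ‖x‖ * δ) (𝓝[>] 0) (𝓝 0) := by
    simpa using ((tendsto_id (x := 𝓝 (0 : ℝ))).const_mul (2 * ‖x‖)).mono_left nhdsWithin_le_nhds
  rw [SemiconjBy, ← sub_eq_zero, ← norm_le_zero_iff]
  exact ge_of_tendsto hlim (eventually_nhdsWithin_of_forall hbound)

variable [PartialOrder A] [StarOrderedRing A]

theorem SemiconjBy.cfc_sqrt {x a b : A} (h : SemiconjBy x a b) (ha : 0 ≤ a) (hb : 0 ≤ b) :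
    SemiconjBy x (CFC.sqrt a) (CFC.sqrt b) := by
  rw [CFC.sqrt_eq_real_sqrt a, CFC.sqrt_eq_real_sqrt b, cfcₙ_eq_cfc, cfcₙ_eq_cfc]
  exact h.cfc_real ha.isSelfAdjoint hb.isSelfAdjoint Real.continuous_sqrt

namespace CStarAlgebra

theorem one_sub_star_mul_self_nonneg {a : A} (ha : ‖a‖ ≤ 1) : 0 ≤ 1 - star a * a := by
  rw [sub_nonneg, ← norm_le_one_iff_of_nonneg _ (star_mul_self_nonneg a),
    CStarRing.norm_star_mul_self]
  nlinarith [norm_nonneg a]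

theorem one_sub_self_mul_star_nonneg {a : A} (ha : ‖a‖ ≤ 1) : 0 ≤ 1 - a * star a := by
  simpa using one_sub_star_mul_self_nonneg (a := star a) (by rwa [norm_star])

theorem mul_sqrt_one_sub_star_mul_self {x : A} (hx : ‖x‖ ≤ 1) :
    x * CFC.sqrt (1 - star x * x) = CFC.sqrt (1 - x * star x) * x :=
  (semiconjBy_one_sub_star_mul_self x).cfc_sqrt (one_sub_star_mul_self_nonneg hx)
    (one_sub_self_mul_star_nonneg hx)

end CStarAlgebra

end CStarAlgebra

namespace ContinuousLinearMap

variable {H : Type*} [NormedAddCommGroup H] [InnerProductSpace ℂ H] [CompleteSpace H]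

theorem ker_cfcSqrt {A : H →L[ℂ] H} (hA : 0 ≤ A) :
    (CFC.sqrt A : H →L[ℂ] H).ker = A.ker := by
  have h := ker_adjoint_comp_self (CFC.sqrt A)
  rwa [← star_eq_adjoint, (CFC.sqrt_nonneg A).isSelfAdjoint.star_eq, ← mul_def,
    CFC.sqrt_mul_sqrt_self A hA, eq_comm] at h

theorem norm_sq_neg_apply_add_smul_apply {T D Ds : H →L[ℂ] H} (hD : IsSelfAdjoint D)
    (hDs : IsSelfAdjoint Ds) (hDD : D * D = 1 - star T * T) (hDsDs : Ds * Ds = 1 - T * star T)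
    (hTD : T * D = Ds * T) {u v : H} {lam : ℂ} (hv : v - lam • star T v = D u) :
    ‖-T u + lam • Ds v‖ ^ 2 = ‖u‖ ^ 2 - (1 - ‖lam‖ ^ 2) * ‖v‖ ^ 2 := by
  set w := star T v
  have hDsym : ∀ x y : H, ⟪D x, y⟫_ℂ = ⟪x, D y⟫_ℂ := hD.isSymmetric
  have hDssym : ∀ x y : H, ⟪Ds x, y⟫_ℂ = ⟪x, Ds y⟫_ℂ := hDs.isSymmetric
  have hTadj : ∀ x y : H, ⟪T x, y⟫_ℂ = ⟪x, star T y⟫_ℂ := fun x y =>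
    (adjoint_inner_right T x y).symm
  have hTadj' : ∀ x y : H, ⟪x, T y⟫_ℂ = ⟪star T x, y⟫_ℂ := fun x y =>
    (adjoint_inner_left T y x).symm
  have hDD' (x : H) : D (D x) = x - star T (T x) := by simpa using congr($hDD x)
  have hDsDs' (x : H) : Ds (Ds x) = x - T (star T x) := by simpa using congr($hDsDs x)
  have hTD' (x : H) : T (D x) = Ds (T x) := by simpa using congr($hTD x)
  have hTu : ⟪T u, T u⟫_ℂ = ⟪u, u⟫_ℂ - ⟪D u, D u⟫_ℂ := by
    rw [hDsym, hDD', inner_sub_right, hTadj, sub_sub_cancel]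
  have hDsv : ⟪Ds v, Ds v⟫_ℂ = ⟪v, v⟫_ℂ - ⟪w, w⟫_ℂ := by
    rw [hDssym, hDsDs', inner_sub_right, hTadj']
  have hTuDsv : ⟪T u, Ds v⟫_ℂ = ⟪D u, w⟫_ℂ := by
    rw [← hDssym, ← hTD', hTadj]
  have hDsvTu : ⟪Ds v, T u⟫_ℂ = ⟪w, D u⟫_ℂ := by
    rw [hDssym, ← hTD', hTadj']
  have hinner : ⟪-T u + lam • Ds v, -T u + lam • Ds v⟫_ℂ
      = ⟪u, u⟫_ℂ - (1 - conj lam * lam) * ⟪v, v⟫_ℂ := by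
    simp only [inner_add_left, inner_add_right, inner_neg_left, inner_neg_right, inner_smul_left,
      inner_smul_right, hTu, hDsv, hTuDsv, hDsvTu, ← hv, inner_sub_left, inner_sub_right]
    ring
  rw [Complex.conj_mul'] at hinner
  simp only [inner_self_eq_norm_sq_to_K] at hinner
  apply Complex.ofReal_injective
  push_cast
  exact hinner

noncomputable def characteristicFunction (T : H →L[ℂ] H) (lam : ℂ) (u : H) : H :=
  -T u + lam • CFC.sqrt (1 - T * star T)
    (Ring.inverse (1 - lam • star T) (CFC.sqrt (1 - star T * T) u))

variable {T : H →L[ℂ] H}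

theorem characteristicFunction_mem_orthogonal (hT : ‖T‖ ≤ 1) (lam : ℂ) {u : H}
    (hu : u ∈ (1 - star T * T : H →L[ℂ] H).kerᗮ) :
    characteristicFunction T lam u ∈ (1 - T * star T : H →L[ℂ] H).kerᗮ := by
  rw [Submodule.mem_orthogonal]
  intro z hz
  have hDsz : CFC.sqrt (1 - T * star T) z = 0 := by
    rw [← ker_cfcSqrt (CStarAlgebra.one_sub_self_mul_star_nonneg hT)] at hz
    exact hz
  have hTz : star T z ∈ (1 - star T * T : H →L[ℂ] H).ker := by
    have h := (semiconjBy_one_sub_star_mul_self (star T)).eq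
    rw [star_star] at h
    have key : (1 - star T * T) (star T z) = star T ((1 - T * star T) z) := congr($h z).symm
    rw [LinearMap.mem_ker, coe_coe] at hz
    rw [LinearMap.mem_ker, coe_coe, key, hz, map_zero]
  have hTu : ⟪z, T u⟫_ℂ = 0 := by
    rw [← adjoint_inner_left, ← star_eq_adjoint]
    exact Submodule.inner_right_of_mem_orthogonal hTz hu
  rw [characteristicFunction, inner_add_right, inner_neg_right, inner_smul_right,
    ← adjoint_inner_left (CFC.sqrt _), ← star_eq_adjoint, (CFC.sqrt_nonneg _).isSelfAdjoint.star_eq,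
    hDsz, inner_zero_left, hTu]
  simp

theorem norm_characteristicFunction_lt (hT : ‖T‖ ≤ 1) {lam : ℂ} (hlam : ‖lam‖ < 1) {u : H}
    (hu : u ∈ (1 - star T * T : H →L[ℂ] H).kerᗮ) (hu0 : u ≠ 0) :
    ‖characteristicFunction T lam u‖ < ‖u‖ := by
  have hA := CStarAlgebra.one_sub_star_mul_self_nonneg hT
  have hB := CStarAlgebra.one_sub_self_mul_star_nonneg hT
  have hunit : IsUnit (1 - lam • star T) := by
    refine isUnit_one_sub_of_norm_lt_one ?_
    rw [norm_smul, norm_star]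
    nlinarith [norm_nonneg lam, norm_nonneg T]
  set v := Ring.inverse (1 - lam • star T) (CFC.sqrt (1 - star T * T) u)
  have hv : v - lam • star T v = CFC.sqrt (1 - star T * T) u := by
    simpa using congr($(Ring.mul_inverse_cancel _ hunit) (CFC.sqrt (1 - star T * T) u))
  have hDu : CFC.sqrt (1 - star T * T) u ≠ 0 := fun h => hu0 <|
    Submodule.disjoint_def.mp (Submodule.orthogonal_disjoint _) u (ker_cfcSqrt hA ▸ h) hu
  have hv0 : v ≠ 0 := by
    rintro h
    apply hDu
    rw [← hv, h, map_zero, smul_zero, sub_zero]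
  have hsq : ‖characteristicFunction T lam u‖ ^ 2 < ‖u‖ ^ 2 := by
    rw [characteristicFunction, norm_sq_neg_apply_add_smul_apply
      (CFC.sqrt_nonneg _).isSelfAdjoint (CFC.sqrt_nonneg _).isSelfAdjoint
      (CFC.sqrt_mul_sqrt_self _ hA) (CFC.sqrt_mul_sqrt_self _ hB)
      (CStarAlgebra.mul_sqrt_one_sub_star_mul_self hT) hv]
    have hlam2 : ‖lam‖ ^ 2 < 1 := by nlinarith [norm_nonneg lam]
    have := mul_pos (sub_pos.mpr hlam2) (pow_pos (norm_pos_iff.mpr hv0) 2)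
    linarith
  exact lt_of_pow_lt_pow_left₀ 2 (norm_nonneg u) hsq

end ContinuousLinearMap

/-- Let `T` be a contraction on `H`, `K = ker(Id − T*T)`,
`K⋆ = ker(Id − TT*)`, and for `|λ| < 1` define the characteristic function
`Θ_T(λ)u = −Tu + λ𝔇⋆(Id − λT*)⁻¹𝔇u` for `u ∈ K^⊥`, where
`𝔇 = (Id − T*T)^{1/2}`, `𝔇⋆ = (Id − TT*)^{1/2}` are the positive square
roots (`CFC.sqrt`) and the inverse is `Ring.inverse`. Then for every `|λ| < 1`,
`Θ_T(λ)` maps `K^⊥` into `K⋆^⊥` and is a pure contraction: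
`‖Θ_T(λ)u‖ < ‖u‖` for every nonzero `u ∈ K^⊥`. -/
theorem characteristic_function_pure_contraction
    {H : Type*} [NormedAddCommGroup H] [InnerProductSpace ℂ H] [CompleteSpace H]
    (T : H →L[ℂ] H) (hT : ‖T‖ ≤ 1)
    (K Ks : Submodule ℂ H)
    (hK : K = LinearMap.ker ((1 - adjoint T ∘L T : H →L[ℂ] H) : H →ₗ[ℂ] H))
    (hKs : Ks = LinearMap.ker ((1 - T ∘L adjoint T : H →L[ℂ] H) : H →ₗ[ℂ] H))
    (D Ds : H →L[ℂ] H)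
    (hD : D = CFC.sqrt (1 - adjoint T ∘L T))
    (hDs : Ds = CFC.sqrt (1 - T ∘L adjoint T))
    (Θ : ℂ → H → H)
    (hΘ : ∀ (lam : ℂ) (u : H),
      Θ lam u = -(T u) + lam • Ds (Ring.inverse (1 - lam • adjoint T) (D u))) :
    ∀ (lam : ℂ), ‖lam‖ < 1 → ∀ u ∈ Kᗮ,
      Θ lam u ∈ Ksᗮ ∧ (u ≠ 0 → ‖Θ lam u‖ < ‖u‖) := by
  intro lam hlam u hu
  simp only [← star_eq_adjoint, ← mul_def] at hK hKs hD hDs hΘ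
  subst hK hKs hD hDs
  rw [hΘ]
  exact ⟨characteristicFunction_mem_orthogonal hT lam hu,
    fun hu0 => norm_characteristicFunction_lt hT hlam hu hu0⟩
end

section
/- Let T be a completely non-unitary contraction on H and let x ∈ H. Suppose that ⟨x, (Id − λ̄T)⁻¹f⟩ = 0 for all λ with |λ| < 1 and all f ∈ K⋆^⊥, and that ⟨x, (Id − λ̄T*)⁻¹g⟩ = 0 for all λ with |λ| < 1 and all g ∈ K^⊥. Then x = 0. -/
/-! Near `λ = 0` the resolvent `(1 - λ̄T)⁻¹` is the Neumann series `∑ λ̄ⁿ Tⁿ`, so the hypotheses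
say that `x ⊥ Tⁿ(K⋆ᗮ)` and `x ⊥ T*ⁿ(Kᗮ)` for every `n`, i.e. `Tⁿ x ∈ K` and `T*ⁿ x ∈ K⋆`. The
vectors with this property form a closed subspace which `T` and `T*` map into itself and on which
`T*T = TT* = 1`; there `T` is unitary, so complete non-unitarity makes the subspace, and with it
`x`, zero. -/

open scoped InnerProductSpace ComplexConjugate NNReal
open ContinuousLinearMap

open FormalMultilinearSeries in
theorem eq_zero_of_hasSum_mul_pow_eq_zero {𝕜 : Type*}
    [NontriviallyNormedField 𝕜] {a : ℕ → 𝕜} {r : ℝ≥0} (hr : 0 < r) {C : ℝ}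
    (ha : ∀ n, ‖a n‖ * r ^ n ≤ C) (h : ∀ z : 𝕜, ‖z‖ < r → HasSum (fun n ↦ a n * z ^ n) 0)
    (n : ℕ) : a n = 0 := by
  have hp : HasFPowerSeriesOnBall 0 (ofScalars 𝕜 a) 0 r := by
    refine ⟨(ofScalars 𝕜 a).le_radius_of_bound C fun n ↦ ?_, by simpa using hr, fun {y} hy ↦ ?_⟩
    · simpa [ofScalars_norm] using ha n
    · simp only [ofScalars_apply_eq, smul_eq_mul, Pi.zero_apply]
      exact h y (by simpa using hy)
  simpa [ofScalars_eq_zero] using congrArg (· n) hp.hasFPowerSeriesAt.eq_zero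

theorem ContinuousLinearMap.norm_pow_apply_le {𝕜 E : Type*} [NontriviallyNormedField 𝕜]
    [SeminormedAddCommGroup E] [NormedSpace 𝕜 E] (S : E →L[𝕜] E) (n : ℕ) (f : E) :
    ‖(S ^ n) f‖ ≤ ‖S‖ ^ n * ‖f‖ := by
  induction n with
  | zero => simp
  | succ n ih =>
    rw [pow_succ', mul_apply_eq_comp, pow_succ', mul_assoc]
    exact (S.le_opNorm _).trans (by gcongr)

section

variable {𝕜 E : Type*} [RCLike 𝕜] [NormedAddCommGroup E] [InnerProductSpace 𝕜 E]

theorem ContinuousLinearMap.mem_ker_one_sub_comp_iff (A B : E →L[𝕜] E) {y : E} :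
    y ∈ LinearMap.ker ((1 - A ∘L B : E →L[𝕜] E) : E →ₗ[𝕜] E) ↔ A (B y) = y := by
  rw [LinearMap.mem_ker, coe_coe, sub_apply, one_apply_eq_self, comp_apply, sub_eq_zero, eq_comm]

variable [CompleteSpace E]

theorem inner_pow_apply_eq_zero_of_inner_resolvent {S : E →L[𝕜] E} {f x : E}
    (h : ∀ lam : 𝕜, ‖lam‖ < 1 → ⟪Ring.inverse (1 - conj lam • S) f, x⟫_𝕜 = 0) (n : ℕ) :
    ⟪(S ^ n) f, x⟫_𝕜 = 0 := by
  set r : ℝ≥0 := (‖S‖₊ + 1)⁻¹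
  have hr : 0 < r := by positivity
  have hr_eq : (r : ℝ) = (‖S‖ + 1)⁻¹ := by simp [r]
  have hSr : ‖S‖ * r < 1 := by
    rw [hr_eq, ← div_eq_mul_inv, div_lt_one (by positivity)]
    linarith
  have hr1 : (r : ℝ) ≤ 1 := hr_eq ▸ inv_le_one_of_one_le₀ (by linarith [norm_nonneg S])
  refine eq_zero_of_hasSum_mul_pow_eq_zero
    (a := fun n ↦ ⟪(S ^ n) f, x⟫_𝕜) (C := ‖f‖ * ‖x‖) hr
    (fun n ↦ ?_) (fun lam hlam ↦ ?_) n
  · calc ‖⟪(S ^ n) f, x⟫_𝕜‖ * r ^ n ≤ ‖S‖ ^ n * ‖f‖ * ‖x‖ * r ^ n := by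
          gcongr
          calc ‖⟪(S ^ n) f, x⟫_𝕜‖ ≤ ‖(S ^ n) f‖ * ‖x‖ := norm_inner_le_norm _ _
            _ ≤ ‖S‖ ^ n * ‖f‖ * ‖x‖ := by gcongr; exact S.norm_pow_apply_le n f
      _ = (‖S‖ * r) ^ n * (‖f‖ * ‖x‖) := by ring
      _ ≤ ‖f‖ * ‖x‖ := mul_le_of_le_one_left (by positivity) (pow_le_one₀ (by positivity) hSr.le)
  · have hsmall : ‖conj lam • S‖ < 1 := by
      rw [norm_smul, RCLike.norm_conj, mul_comm]
      exact (mul_le_mul_of_nonneg_left hlam.le (norm_nonneg S)).trans_lt hSr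
    have := ((hasSum_geom_series_inverse _ hsmall).mapL (apply 𝕜 E f)).mapL (innerSLFlip 𝕜 x)
    rw [innerSLFlip_apply_apply, apply_apply, h lam (hlam.trans_le hr1)] at this
    simpa [smul_pow, inner_smul_left, mul_comm] using this

theorem adjoint_pow_apply_mem_of_inner_resolvent {S : E →L[𝕜] E} {K : Submodule 𝕜 E}
    (hK : IsClosed (K : Set E)) {x : E}
    (h : ∀ lam : 𝕜, ‖lam‖ < 1 → ∀ g ∈ Kᗮ, ⟪Ring.inverse (1 - conj lam • S) g, x⟫_𝕜 = 0)
    (n : ℕ) : (adjoint S ^ n) x ∈ K := by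
  rw [← hK.submodule_topologicalClosure_eq, ← K.orthogonal_orthogonal_eq_closure]
  intro g hg
  rw [← star_eq_adjoint, ← star_pow, star_eq_adjoint, adjoint_inner_right]
  exact inner_pow_apply_eq_zero_of_inner_resolvent (fun lam hlam ↦ h lam hlam g hg) n

namespace ContinuousLinearMap

noncomputable def unitaryPart (T : E →L[𝕜] E) : Submodule 𝕜 E :=
  ⨅ n : ℕ, (LinearMap.ker ((1 - adjoint T ∘L T : E →L[𝕜] E) : E →ₗ[𝕜] E)).comap
      ((T ^ n : E →L[𝕜] E) : E →ₗ[𝕜] E) ⊓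
    (LinearMap.ker ((1 - T ∘L adjoint T : E →L[𝕜] E) : E →ₗ[𝕜] E)).comap
      ((adjoint T ^ n : E →L[𝕜] E) : E →ₗ[𝕜] E)

variable {T : E →L[𝕜] E}

theorem mem_unitaryPart {y : E} : y ∈ unitaryPart T ↔
    ∀ n, adjoint T (T ((T ^ n) y)) = (T ^ n) y ∧
      T (adjoint T ((adjoint T ^ n) y)) = (adjoint T ^ n) y := by
  simp only [unitaryPart, Submodule.mem_iInf, Submodule.mem_inf, Submodule.mem_comap, coe_coe,
    mem_ker_one_sub_comp_iff]

theorem unitaryPart_adjoint : unitaryPart (adjoint T) = unitaryPart T := by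
  ext y
  simp only [mem_unitaryPart, adjoint_adjoint]
  exact forall_congr' fun n ↦ and_comm

theorem isClosed_unitaryPart : IsClosed (unitaryPart T : Set E) := by
  simp only [unitaryPart, Submodule.coe_iInf, Submodule.coe_inf, Submodule.comap_coe, coe_coe]
  exact isClosed_iInter fun n ↦ ((isClosed_ker _).preimage (T ^ n).continuous).inter
    ((isClosed_ker _).preimage (adjoint T ^ n).continuous)

theorem apply_mem_unitaryPart {y : E} (hy : y ∈ unitaryPart T) : T y ∈ unitaryPart T := by
  rw [mem_unitaryPart] at hy ⊢
  have hTy : adjoint T (T y) = y := by simpa using (hy 0).1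
  refine fun n ↦ ⟨?_, ?_⟩
  · rw [← mul_apply_eq_comp (T ^ n), ← pow_succ]
    exact (hy (n + 1)).1
  · cases n with
    | zero => rw [pow_zero, one_apply_eq_self, hTy]
    | succ n =>
      rw [pow_succ, mul_apply_eq_comp, hTy]
      exact (hy n).2

theorem adjoint_apply_mem_unitaryPart {y : E} (hy : y ∈ unitaryPart T) :
    adjoint T y ∈ unitaryPart T := by
  rw [← unitaryPart_adjoint] at hy ⊢
  exact apply_mem_unitaryPart hy

theorem norm_apply_of_mem_unitaryPart {y : E} (hy : y ∈ unitaryPart T) : ‖T y‖ = ‖y‖ := by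
  have hTy : adjoint T (T y) = y := by simpa using (mem_unitaryPart.1 hy 0).1
  rw [← sq_eq_sq₀ (norm_nonneg _) (norm_nonneg _), apply_norm_sq_eq_inner_adjoint_left, comp_apply,
    hTy, inner_self_eq_norm_sq]

theorem image_unitaryPart : T '' unitaryPart T = unitaryPart T := by
  refine (Set.image_subset_iff.2 fun y ↦ apply_mem_unitaryPart).antisymm fun y hy ↦
    ⟨adjoint T y, adjoint_apply_mem_unitaryPart hy, ?_⟩
  simpa using (mem_unitaryPart.1 hy 0).2

end ContinuousLinearMap

end

theorem cnu_vanishing_general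
    {H : Type*} [NormedAddCommGroup H] [InnerProductSpace ℂ H] [CompleteSpace H]
    (T : H →L[ℂ] H)
    (hcnu : ∀ 𝒦 : Submodule ℂ H, IsClosed (𝒦 : Set H) →
      (∀ v ∈ 𝒦, T v ∈ 𝒦) → (∀ v ∈ 𝒦, ‖T v‖ = ‖v‖) →
      T '' (𝒦 : Set H) = (𝒦 : Set H) → 𝒦 = ⊥)
    (K Ks : Submodule ℂ H)
    (hK : K = LinearMap.ker ((1 - adjoint T ∘L T : H →L[ℂ] H) : H →ₗ[ℂ] H))
    (hKs : Ks = LinearMap.ker ((1 - T ∘L adjoint T : H →L[ℂ] H) : H →ₗ[ℂ] H))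
    (x : H)
    (h1 : ∀ (lam : ℂ), ‖lam‖ < 1 → ∀ f ∈ Ksᗮ,
      ⟪Ring.inverse (1 - (conj lam) • T) f, x⟫_ℂ = 0)
    (h2 : ∀ (lam : ℂ), ‖lam‖ < 1 → ∀ g ∈ Kᗮ,
      ⟪Ring.inverse (1 - (conj lam) • adjoint T) g, x⟫_ℂ = 0) :
    x = 0 := by
  subst hK hKs
  have hx : x ∈ T.unitaryPart := (Submodule.mem_iInf _).2 fun n ↦ Submodule.mem_inf.2
    ⟨by simpa only [Submodule.mem_comap, coe_coe, adjoint_adjoint] using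
        adjoint_pow_apply_mem_of_inner_resolvent (isClosed_ker _) h2 n,
      adjoint_pow_apply_mem_of_inner_resolvent (isClosed_ker _) h1 n⟩
  rw [hcnu _ isClosed_unitaryPart (fun _ ↦ apply_mem_unitaryPart)
    (fun _ ↦ norm_apply_of_mem_unitaryPart) image_unitaryPart] at hx
  exact (Submodule.mem_bot ℂ).1 hx

/-- Let `T` be a completely non-unitary contraction on `H`
(the only closed `T`-invariant subspace on which `T` restricts to a unitary
is `{0}`), `K = ker(Id − T*T)`, `K⋆ = ker(Id − TT*)`, and `x ∈ H`. If
`⟨x, (Id − λ̄T)⁻¹f⟩ = 0` for all `|λ| < 1` and all `f ∈ K⋆^⊥`, and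
`⟨x, (Id − λ̄T*)⁻¹g⟩ = 0` for all `|λ| < 1` and all `g ∈ K^⊥`, then `x = 0`.
(Paper inner products `⟨·,·⟩` are linear in the first variable, i.e.
`⟨u,v⟩ = ⟪v,u⟫_ℂ` in Mathlib's convention; the inverses are `Ring.inverse`.) -/
theorem cnu_vanishing
    {H : Type*} [NormedAddCommGroup H] [InnerProductSpace ℂ H] [CompleteSpace H]
    (T : H →L[ℂ] H) (hT : ‖T‖ ≤ 1)
    (hcnu : ∀ 𝒦 : Submodule ℂ H, IsClosed (𝒦 : Set H) →
      (∀ v ∈ 𝒦, T v ∈ 𝒦) → (∀ v ∈ 𝒦, ‖T v‖ = ‖v‖) →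
      T '' (𝒦 : Set H) = (𝒦 : Set H) → 𝒦 = ⊥)
    (K Ks : Submodule ℂ H)
    (hK : K = LinearMap.ker ((1 - adjoint T ∘L T : H →L[ℂ] H) : H →ₗ[ℂ] H))
    (hKs : Ks = LinearMap.ker ((1 - T ∘L adjoint T : H →L[ℂ] H) : H →ₗ[ℂ] H))
    (x : H)
    (h1 : ∀ (lam : ℂ), ‖lam‖ < 1 → ∀ f ∈ Ksᗮ,
      ⟪Ring.inverse (1 - (conj lam) • T) f, x⟫_ℂ = 0)
    (h2 : ∀ (lam : ℂ), ‖lam‖ < 1 → ∀ g ∈ Kᗮ,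
      ⟪Ring.inverse (1 - (conj lam) • adjoint T) g, x⟫_ℂ = 0) :
    x = 0 :=
  cnu_vanishing_general T hcnu K Ks hK hKs x h1 h2
end
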